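/- arXiv:2106.16189 — 5 statements merged into one kernel-verified Lean document; each statement's English description precedes it below -/
import Mathlib

section
/- For all real numbers x, y, s, the following identity of formal power series in the variable z holds: (y·E(xz) − x·E(yz))² · Σ_{n≥0} A_{n+1}(x,y,s)·zⁿ/n! = (y−x)² · E((y+s)z), where for a real number a, E(az) denotes the formal exponential series Σ_{n≥0} aⁿzⁿ/n!. (Equivalently, Σ_{n≥0} A_{n+1}(x,y,s)zⁿ/n! = e^{z(y+s)}·((y−x)/(y·e^{xz} − x·e^{yz}))².) -/
/-!
Inserting the largest letter `n + 2` into the `n + 2` slots of a permutation of `[n + 1]` gives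
`A_{n+2} = (y + s) A_{n+1} + x y ∂ A_{n+1}` with `∂ = ∂_x + ∂_y + ∂_s`. Hence
`G(z) = ∑ A_{n+1} zⁿ / n!` satisfies `G' = (y + s) G + x y ∂G` (with `∂` acting on
coefficients), while `Δ = y E(xz) - x E(yz)` satisfies `Δ' = x y ∂Δ - x y z Δ`. So `Δ² G` and
`(y - x)² E((y + s) z)` both solve `H' = (y + s) H + x y ∂H - 2 x y z H` and have the same
constant term, and a solution of this equation is determined by its constant term. We compute
in `ℚ[x, y, s]⟦z⟧`, where `∂` is a derivation, and then evaluate at real `x, y, s`.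
-/


open Finset

/-- The word `π(1)π(2)⋯π(n)` of a permutation, as a function on 0-based positions
(value `π(i+1)` at position `i`, and `0` outside `{0,…,n-1}`). -/
def permWord {n : ℕ} (π : Equiv.Perm (Fin n)) (i : ℕ) : ℕ :=
  if h : i < n then ((π ⟨i, h⟩ : Fin n) : ℕ) + 1 else 0

/-- Number of descents: indices `i ∈ {1,…,n-1}` with `π(i) > π(i+1)`. -/
def desNum {n : ℕ} (π : Equiv.Perm (Fin n)) : ℕ :=
  ((range (n - 1)).filter fun i => permWord π (i + 1) < permWord π i).card

/-- Number of big ascents: indices `i` with `π(i+1) ≥ π(i) + 2`. -/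
def bascNum {n : ℕ} (π : Equiv.Perm (Fin n)) : ℕ :=
  ((range (n - 1)).filter fun i => permWord π i + 2 ≤ permWord π (i + 1)).card

/-- Number of successions: indices `i` with `π(i+1) = π(i) + 1`. -/
def sucNum {n : ℕ} (π : Equiv.Perm (Fin n)) : ℕ :=
  ((range (n - 1)).filter fun i => permWord π (i + 1) = permWord π i + 1).card

/-- The trivariate Eulerian polynomial `A_n(x,y,s)` evaluated at real numbers. -/
def trivEuler (x y s : ℝ) (n : ℕ) : ℝ :=
  ∑ π : Equiv.Perm (Fin n), x ^ bascNum π * y ^ desNum π * s ^ sucNum π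

/-- The formal exponential series `E(az) = Σ_{n≥0} aⁿ zⁿ/n!`. -/
noncomputable def expPS (a : ℝ) : PowerSeries ℝ :=
  PowerSeries.mk fun n => a ^ n / n.factorial

open Equiv

section PermWord

variable {n : ℕ}

lemma permWord_le (σ : Perm (Fin n)) (i : ℕ) : permWord σ i ≤ n := by
  unfold permWord
  split_ifs with h
  · exact (σ ⟨i, h⟩).isLt
  · exact Nat.zero_le n

lemma permWord_injOn (σ : Perm (Fin n)) : Set.InjOn (permWord σ) (Set.Iio n) := by
  intro i hi j hj h
  simp only [permWord, dif_pos (Set.mem_Iio.1 hi), dif_pos (Set.mem_Iio.1 hj),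
    Nat.add_right_cancel_iff, Fin.val_inj, EmbeddingLike.apply_eq_iff_eq, Fin.mk.injEq] at h
  exact h

lemma permWord_eq_succ_iff (σ : Perm (Fin (n + 1))) (i : ℕ) :
    permWord σ i = n + 1 ↔ i = σ.symm (Fin.last n) := by
  unfold permWord
  split_ifs with h
  · rw [Nat.add_right_cancel_iff]
    constructor
    · intro h'
      rw [← show σ ⟨i, h⟩ = Fin.last n from Fin.ext h', σ.symm_apply_apply]
    · rintro rfl
      simp
  · simp only [false_iff]
    exact fun h' => h (h' ▸ (σ.symm _).isLt)

def insertMax (σ : Perm (Fin n)) (p : Fin (n + 1)) : Perm (Fin (n + 1)) :=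
  (finSuccEquiv' p).trans (σ.optionCongr.trans (finSuccEquiv' (Fin.last n)).symm)

@[simp]
lemma insertMax_apply_self (σ : Perm (Fin n)) (p : Fin (n + 1)) :
    insertMax σ p p = Fin.last n := by
  simp [insertMax]

@[simp]
lemma insertMax_apply_succAbove (σ : Perm (Fin n)) (p : Fin (n + 1)) (i : Fin n) :
    insertMax σ p (p.succAbove i) = (σ i).castSucc := by
  simp [insertMax]

lemma insertMax_injective :
    Function.Injective fun q : Perm (Fin n) × Fin (n + 1) => insertMax q.1 q.2 := by
  rintro ⟨σ, p⟩ ⟨τ, q⟩ h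
  simp only at h
  have hpq : p = q := by
    by_contra hne
    obtain ⟨i, rfl⟩ := Fin.exists_succAbove_eq hne
    have := congrArg Fin.val (insertMax_apply_self σ (q.succAbove i))
    rw [h, insertMax_apply_succAbove] at this
    simp at this
    omega
  subst hpq
  refine Prod.ext (Equiv.ext fun i => ?_) rfl
  simpa using congrArg (· (p.succAbove i)) h

lemma sum_perm_succ {M : Type*} [AddCommMonoid M] (f : Perm (Fin (n + 1)) → M) :
    ∑ π, f π = ∑ σ : Perm (Fin n), ∑ p, f (insertMax σ p) := by
  have hbij : Function.Bijective fun q : Perm (Fin n) × Fin (n + 1) => insertMax q.1 q.2 := by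
    rw [Fintype.bijective_iff_injective_and_card]
    refine ⟨insertMax_injective, ?_⟩
    simp [Fintype.card_perm, Nat.factorial_succ, mul_comm]
  rw [← Fintype.sum_prod_type', ← Function.Bijective.sum_comp hbij]

def insertAt (w : ℕ → ℕ) (p v : ℕ) (i : ℕ) : ℕ :=
  if i < p then w i else if i = p then v else w (i - 1)

lemma permWord_insertMax (σ : Perm (Fin n)) (p : Fin (n + 1)) :
    permWord (insertMax σ p) = insertAt (permWord σ) p (n + 1) := by
  funext i
  unfold insertAt permWord
  have hp := p.isLt
  rcases lt_trichotomy i p with h | rfl | h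
  · have hi : (⟨i, by omega⟩ : Fin (n + 1)) = p.succAbove ⟨i, by omega⟩ := by
      rw [Fin.succAbove_of_castSucc_lt _ _ (by simpa [Fin.lt_def] using h)]; rfl
    simp [h, hi, show i < n by omega, show i < n + 1 by omega]
  · simp [show (p : ℕ) < n + 1 from hp]
  · by_cases hin : i < n + 1
    · have hi : (⟨i, hin⟩ : Fin (n + 1)) = p.succAbove ⟨i - 1, by omega⟩ := by
        rw [Fin.succAbove_of_le_castSucc _ _ (by simp [Fin.le_def]; omega)]
        ext; simp; omega
      simp [hin, hi, show ¬ i < p by omega, show i ≠ p by omega, show i - 1 < n by omega]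
    · simp [hin, show ¬ i < p by omega, show i ≠ p by omega, show ¬ i - 1 < n by omega]

end PermWord

lemma Derivation.leibniz_prod {k A M ι : Type*} [CommSemiring k] [CommSemiring A]
    [AddCommMonoid M] [Algebra k A] [Module A M] [Module k M] [IsScalarTower k A M]
    [DecidableEq ι] (D : Derivation k A M) (t : Finset ι) (f : ι → A) :
    D (∏ i ∈ t, f i) = ∑ i ∈ t, (∏ j ∈ t.erase i, f j) • D (f i) := by
  induction t using Finset.induction_on with
  | empty => simp
  | insert a t ha ih =>
    rw [prod_insert ha, leibniz, ih, sum_insert ha, erase_insert ha, smul_sum, add_comm]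
    congr 1
    refine sum_congr rfl fun i hi => ?_
    rw [erase_insert_of_ne (ne_of_mem_of_not_mem hi ha).symm,
      prod_insert (fun h => ha (mem_of_mem_erase h)), smul_smul]

section Weights

variable {M : Type*} (x y s : M)

def stepWeight (u v : ℕ) : M :=
  if v < u then y else if v = u + 1 then s else x

lemma stepWeight_succ_succ_permWord {m : ℕ} (σ : Perm (Fin (m + 1))) (i : ℕ) :
    stepWeight x y s (m + 2) (permWord σ i) = y :=
  if_pos (by have := permWord_le σ i; omega)

lemma stepWeight_permWord_succ_succ {m : ℕ} (σ : Perm (Fin (m + 1))) (i : ℕ) :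
    stepWeight x y s (permWord σ i) (m + 2) = if i = σ.symm (Fin.last m) then s else x := by
  have := permWord_le σ i
  simp only [← permWord_eq_succ_iff, stepWeight]
  split_ifs <;> first | rfl | omega

variable [CommMonoid M]

def wordWeight (w : ℕ → ℕ) (m : ℕ) : M :=
  ∏ i ∈ range m, stepWeight x y s (w i) (w (i + 1))

lemma stepWeight_of_ne {u v : ℕ} (h : u ≠ v) :
    stepWeight x y s u v =
      x ^ (if u + 2 ≤ v then 1 else 0) * y ^ (if v < u then 1 else 0) *
        s ^ (if v = u + 1 then 1 else 0) := by
  unfold stepWeight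
  split_ifs <;> first | omega | simp

lemma wordWeight_permWord {n : ℕ} (σ : Perm (Fin n)) :
    wordWeight x y s (permWord σ) (n - 1) = x ^ bascNum σ * y ^ desNum σ * s ^ sucNum σ := by
  unfold wordWeight bascNum desNum sucNum
  simp only [card_filter, ← prod_pow_eq_pow_sum, ← prod_mul_distrib]
  refine prod_congr rfl fun i hi => stepWeight_of_ne x y s fun h => ?_
  have := permWord_injOn σ (Set.mem_Iio.2 (by simp at hi; omega))
    (Set.mem_Iio.2 (by simp at hi; omega)) h
  omega

variable (w : ℕ → ℕ) (v m : ℕ)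

lemma wordWeight_insertAt_zero :
    wordWeight x y s (insertAt w 0 v) (m + 1) =
      stepWeight x y s v (w 0) * wordWeight x y s w m := by
  simp [wordWeight, insertAt, prod_range_succ', mul_comm]

lemma wordWeight_insertAt_end :
    wordWeight x y s (insertAt w (m + 1) v) (m + 1) =
      wordWeight x y s w m * stepWeight x y s (w m) v := by
  rw [wordWeight, prod_range_succ, wordWeight]
  congr 1
  · exact prod_congr rfl fun i hi => by simp at hi; simp [insertAt, hi, show i < m + 1 by omega]
  · simp [insertAt]

lemma wordWeight_insertAt_of_lt {i : ℕ} (h : i < m) :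
    wordWeight x y s (insertAt w (i + 1) v) (m + 1) =
      (∏ j ∈ (range m).erase i, stepWeight x y s (w j) (w (j + 1))) *
        stepWeight x y s (w i) v * stepWeight x y s v (w (i + 1)) := by
  have herase : (range m).erase i = range i ∪ Ico (i + 1) m := by
    ext j; simp; omega
  rw [wordWeight, ← prod_range_mul_prod_Ico _ (show i + 2 ≤ m + 1 by omega), prod_range_succ,
    prod_range_succ, herase,
    prod_union (disjoint_left.2 fun j hj hj' => by simp at hj hj'; omega)]
  have hpre : ∀ j ∈ range i, stepWeight x y s (insertAt w (i + 1) v j)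
      (insertAt w (i + 1) v (j + 1)) = stepWeight x y s (w j) (w (j + 1)) := fun j hj => by
    simp at hj; simp [insertAt, show j < i + 1 by omega, hj]
  have hpost : ∏ j ∈ Ico (i + 2) (m + 1),
      stepWeight x y s (insertAt w (i + 1) v j) (insertAt w (i + 1) v (j + 1)) =
        ∏ j ∈ Ico (i + 1) m, stepWeight x y s (w j) (w (j + 1)) := by
    rw [show i + 2 = i + 1 + 1 by rfl, ← prod_Ico_add']
    refine prod_congr rfl fun j hj => ?_
    simp at hj
    simp [insertAt, show ¬ j + 1 < i + 1 by omega, show j ≠ i by omega,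
      show ¬ j + 1 < i by omega, show j + 1 ≠ i by omega]
  rw [prod_congr rfl hpre, hpost]
  simp [insertAt]
  ac_rfl

end Weights

section Recurrence

variable {k R : Type*} [CommSemiring k] [CommSemiring R] [Algebra k R] (x y s : R)

def eulerPoly (n : ℕ) : R :=
  ∑ π : Perm (Fin n), x ^ bascNum π * y ^ desNum π * s ^ sucNum π

lemma eulerPoly_eq_sum_wordWeight (n : ℕ) :
    eulerPoly x y s n = ∑ π : Perm (Fin n), wordWeight x y s (permWord π) (n - 1) := by
  simp only [eulerPoly, wordWeight_permWord]

lemma eulerPoly_one : eulerPoly x y s 1 = 1 := by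
  simp [eulerPoly, bascNum, desNum, sucNum]

variable {x y s} (D : Derivation k R R) (hx : D x = 1) (hy : D y = 1) (hs : D s = 1)
include hx hy hs

lemma derivation_wordWeight (w : ℕ → ℕ) (m : ℕ) :
    D (wordWeight x y s w m) =
      ∑ i ∈ range m, ∏ j ∈ (range m).erase i, stepWeight x y s (w j) (w (j + 1)) := by
  rw [wordWeight, Derivation.leibniz_prod]
  refine sum_congr rfl fun i _ => ?_
  rw [show D (stepWeight x y s (w i) (w (i + 1))) = 1 by
      unfold stepWeight; split_ifs <;> assumption,
    smul_eq_mul, mul_one]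

/- Inserting `m + 2` in front adds the factor `y`. Inserting it right after position `i < m`
replaces the factor of the pair `(wᵢ, wᵢ₊₁)` by `x * y`, except after the maximal letter
`m + 1`, where that factor was `y` and becomes `s * y`; inserting at the end then adds `x`
rather than `s`. -/
lemma sum_wordWeight_insertMax {m : ℕ} (σ : Perm (Fin (m + 1))) :
    ∑ p : Fin (m + 2), wordWeight x y s (permWord (insertMax σ p)) (m + 1) =
      (y + s) * wordWeight x y s (permWord σ) m +
        x * y * D (wordWeight x y s (permWord σ) m) := by
  simp only [permWord_insertMax]
  rw [Fin.sum_univ_eq_sum_range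
      (fun p => wordWeight x y s (insertAt (permWord σ) p (m + 2)) (m + 1)),
    sum_range_succ, sum_range_succ', wordWeight_insertAt_zero, wordWeight_insertAt_end,
    sum_congr rfl fun i hi => wordWeight_insertAt_of_lt x y s _ (m + 2) m (mem_range.1 hi),
    derivation_wordWeight D hx hy hs]
  simp only [stepWeight_succ_succ_permWord, stepWeight_permWord_succ_succ]
  set j : ℕ := (σ.symm (Fin.last m) : ℕ)
  have hne : ∀ i ≠ j,
      (∏ l ∈ (range m).erase i, stepWeight x y s (permWord σ l) (permWord σ (l + 1))) *
        (if i = j then s else x) * y =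
      x * y *
        ∏ l ∈ (range m).erase i, stepWeight x y s (permWord σ l) (permWord σ (l + 1)) := by
    intro i hi
    rw [if_neg hi]
    ring
  obtain hjm | hjm := (Nat.lt_succ_iff.1 (σ.symm (Fin.last m)).isLt).lt_or_eq
  · have hj : j ∈ range m := mem_range.2 hjm
    have hdes : stepWeight x y s (permWord σ j) (permWord σ (j + 1)) = y := by
      have := permWord_le σ (j + 1)
      have := (permWord_eq_succ_iff σ (j + 1)).not.2 (by omega)
      exact if_pos (by rw [(permWord_eq_succ_iff σ j).2 rfl]; omega)
    rw [← add_sum_erase _ _ hj, ← add_sum_erase (range m) _ hj,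
      sum_congr rfl fun i hi => hne i (ne_of_mem_erase hi), ← mul_sum, if_pos rfl,
      if_neg hjm.ne', wordWeight, ← prod_erase_mul _ _ hj, hdes]
    ring
  · rw [sum_congr rfl fun i hi => hne i (by simp at hi; omega), ← mul_sum, if_pos hjm.symm]
    ring

theorem eulerPoly_succ_succ (m : ℕ) :
    eulerPoly x y s (m + 2) =
      (y + s) * eulerPoly x y s (m + 1) + x * y * D (eulerPoly x y s (m + 1)) := by
  rw [eulerPoly_eq_sum_wordWeight, eulerPoly_eq_sum_wordWeight, sum_perm_succ,
    Nat.add_sub_cancel, show m + 2 - 1 = m + 1 from rfl,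
    sum_congr rfl fun σ _ => sum_wordWeight_insertMax D hx hy hs σ, sum_add_distrib, map_sum,
    mul_sum, mul_sum]

end Recurrence

lemma map_eulerPoly {R S : Type*} [CommSemiring R] [CommSemiring S] (f : R →+* S) (x y s : R)
    (n : ℕ) : f (eulerPoly x y s n) = eulerPoly (f x) (f y) (f s) n := by
  simp [eulerPoly]

open PowerSeries

section Coeffwise

variable {k R : Type*} [CommSemiring k] [CommSemiring R] [Algebra k R]

noncomputable def Derivation.coeffwise (D : Derivation k R R) : Derivation k R⟦X⟧ R⟦X⟧ where
  toFun f := PowerSeries.mk fun n => D (coeff n f)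
  map_add' f g := by ext; simp
  map_smul' c f := by ext; simp
  map_one_eq_zero' := by ext n; simp [coeff_one]; split_ifs <;> simp
  leibniz' f g := by
    ext n
    simp only [LinearMap.coe_mk, AddHom.coe_mk, coeff_mk, smul_eq_mul, map_add, coeff_mul,
      map_sum, Derivation.leibniz, sum_add_distrib]
    rw [← Finset.Nat.sum_antidiagonal_swap (f := fun p => coeff p.1 g * D (coeff p.2 f))]
    rfl

@[simp]
lemma Derivation.coeff_coeffwise (D : Derivation k R R) (f : R⟦X⟧) (n : ℕ) :
    coeff n (D.coeffwise f) = D (coeff n f) := by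
  simp [Derivation.coeffwise]

@[simp]
lemma Derivation.coeffwise_C (D : Derivation k R R) (r : R) : D.coeffwise (C r) = C (D r) := by
  ext n
  simp [coeff_C]
  split_ifs <;> simp

end Coeffwise

theorem PowerSeries.eq_zero_of_derivative_eq {k R : Type*} [CommSemiring k] [CommRing R]
    [Algebra k R] [IsAddTorsionFree R] (D : Derivation k R R) (a b c : R) {H : R⟦X⟧}
    (hH : d⁄dX R H = C a * H + C b * D.coeffwise H + C c * X * H) (h0 : constantCoeff H = 0) :
    H = 0 := by
  suffices h : ∀ n, ∀ m ≤ n, coeff m H = 0 from ext fun n => by simpa using h n n le_rfl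
  intro n
  induction n with
  | zero => intro m hm; rwa [Nat.le_zero.1 hm, coeff_zero_eq_constantCoeff_apply]
  | succ n ih =>
    intro m hm
    obtain hm | rfl := hm.lt_or_eq
    · exact ih m (by omega)
    have hXH : coeff n (X * H) = 0 := by
      cases n with
      | zero => simp
      | succ n => rw [coeff_succ_X_mul]; exact ih n (by omega)
    have := congrArg (coeff n) hH
    simp only [coeff_derivative, mul_assoc, map_add, coeff_C_mul, hXH,
      Derivation.coeff_coeffwise, ih n le_rfl, map_zero, mul_zero, add_zero] at this
    rwa [← Nat.cast_succ, mul_comm, ← nsmul_eq_mul,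
      nsmul_eq_zero_iff_right n.succ_ne_zero] at this

section Egf

variable {R : Type*} [CommRing R] [Algebra ℚ R]

noncomputable def egf (a : ℕ → R) : R⟦X⟧ :=
  mk fun n => algebraMap ℚ R (1 / n.factorial) * a n

@[simp]
lemma coeff_egf (a : ℕ → R) (n : ℕ) :
    coeff n (egf a) = algebraMap ℚ R (1 / n.factorial) * a n :=
  coeff_mk _ _

lemma algebraMap_inv_factorial_succ_mul (n : ℕ) :
    algebraMap ℚ R (1 / (n + 1).factorial) * (n + 1) = algebraMap ℚ R (1 / n.factorial) := by
  rw [show (n + 1 : R) = algebraMap ℚ R (n + 1) by simp, ← map_mul, Nat.factorial_succ]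
  congr 1
  field_simp
  push_cast
  ring

lemma derivative_egf (a : ℕ → R) : d⁄dX R (egf a) = egf fun n => a (n + 1) := by
  ext n
  rw [coeff_derivative, coeff_egf, coeff_egf, mul_right_comm, algebraMap_inv_factorial_succ_mul]

lemma X_mul_egf (a : ℕ → R) : X * egf a = egf fun n => n * a (n - 1) := by
  ext n
  cases n with
  | zero => simp
  | succ n =>
    rw [coeff_succ_X_mul, coeff_egf, coeff_egf, Nat.add_sub_cancel, Nat.cast_succ,
      ← algebraMap_inv_factorial_succ_mul]
    ring

lemma coeffwise_egf (D : Derivation ℚ R R) (a : ℕ → R) :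
    D.coeffwise (egf a) = egf fun n => D (a n) := by
  ext n
  simp [Derivation.leibniz]

lemma C_mul_egf (c : R) (a : ℕ → R) : C c * egf a = egf fun n => c * a n := by
  ext n
  simp only [coeff_C_mul, coeff_egf]
  ring

lemma egf_add (a b : ℕ → R) : egf a + egf b = egf fun n => a n + b n := by
  ext n
  simp only [map_add, coeff_egf]
  ring

@[simp]
lemma constantCoeff_egf (a : ℕ → R) : constantCoeff (egf a) = a 0 := by
  simp [← coeff_zero_eq_constantCoeff_apply]

lemma derivative_egf_pow (c : R) : d⁄dX R (egf (c ^ ·)) = C c * egf (c ^ ·) := by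
  rw [derivative_egf]
  ext n
  simp [pow_succ]
  ring

lemma coeffwise_egf_pow (D : Derivation ℚ R R) (c : R) :
    D.coeffwise (egf (c ^ ·)) = C (D c) * X * egf (c ^ ·) := by
  rw [coeffwise_egf, mul_assoc, X_mul_egf]
  ext n
  cases n with
  | zero => simp
  | succ n => simp [Derivation.leibniz_pow]; ring

lemma map_egf {S : Type*} [CommRing S] [Algebra ℚ S] (f : R →+* S) (a : ℕ → R) :
    map f (egf a) = egf fun n => f (a n) := by
  ext n
  simp

lemma egf_eq_mk_div (a : ℕ → ℝ) : egf a = mk fun n => a n / n.factorial := by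
  ext n
  simp [div_eq_inv_mul]

end Egf

section Identity

variable {R : Type*} [CommRing R] [Algebra ℚ R] [IsAddTorsionFree R] {x y s : R}
  (D : Derivation ℚ R R) (hx : D x = 1) (hy : D y = 1) (hs : D s = 1)
include hx hy hs

theorem egf_eulerPoly_identity :
    (C y * egf (x ^ ·) - C x * egf (y ^ ·)) ^ 2 * egf (fun n => eulerPoly x y s (n + 1)) =
      C ((y - x) ^ 2) * egf ((y + s) ^ ·) := by
  set Δ := C y * egf (x ^ ·) - C x * egf (y ^ ·)
  set G := egf fun n => eulerPoly x y s (n + 1)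
  set E := egf ((y + s) ^ ·)
  have hΔ : d⁄dX R Δ = C (x * y) * D.coeffwise Δ - C (x * y) * X * Δ := by
    simp only [Δ, map_sub, Derivation.leibniz, derivative_C, Derivation.coeffwise_C,
      derivative_egf_pow, coeffwise_egf_pow, hx, hy, smul_eq_mul, map_mul, map_one]
    ring
  have hG : d⁄dX R G = C (y + s) * G + C (x * y) * D.coeffwise G := by
    rw [derivative_egf, coeffwise_egf, C_mul_egf, C_mul_egf, egf_add]
    simp only [eulerPoly_succ_succ D hx hy hs]
  have hE : d⁄dX R E = C (y + s) * E := derivative_egf_pow _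
  have hE' : D.coeffwise E = C 2 * X * E := by
    rw [coeffwise_egf_pow, map_add, hy, hs, one_add_one_eq_two]
  have hr : D ((y - x) ^ 2) = 0 := by simp [Derivation.leibniz_pow, hx, hy]
  rw [← sub_eq_zero]
  refine eq_zero_of_derivative_eq D (y + s) (x * y) (-(2 * (x * y))) ?_
    (by simp [Δ, G, E, eulerPoly_one])
  simp only [map_sub, Derivation.leibniz, Derivation.leibniz_pow, derivative_C,
    Derivation.coeffwise_C, hΔ, hG, hE, hE', hr, smul_eq_mul, map_mul, map_neg, map_ofNat,
    map_zero]
  ring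

end Identity

/-- `(y·E(xz) − x·E(yz))² · Σ_{n≥0} A_{n+1}(x,y,s) zⁿ/n! = (y−x)² · E((y+s)z)`. -/
theorem stmt0 (x y s : ℝ) :
    (PowerSeries.C y * expPS x - PowerSeries.C x * expPS y) ^ 2 *
      PowerSeries.mk (fun n => trivEuler x y s (n + 1) / n.factorial) =
    PowerSeries.C ((y - x) ^ 2) * expPS (y + s) := by
  let D : Derivation ℚ (MvPolynomial (Fin 3) ℚ) (MvPolynomial (Fin 3) ℚ) :=
    ∑ i, MvPolynomial.pderiv i
  have hD (i : Fin 3) : D (MvPolynomial.X i) = 1 := by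
    rw [← Derivation.coeFnAddMonoidHom_apply, map_sum]
    simp [MvPolynomial.pderiv_X, Pi.single_apply]
  have key := congrArg (PowerSeries.map (MvPolynomial.aeval ![x, y, s]).toRingHom)
    (egf_eulerPoly_identity D (hD 0) (hD 1) (hD 2))
  simp only [map_mul, map_sub, map_pow, PowerSeries.map_C, map_egf, map_eulerPoly] at key
  simpa [egf_eq_mk_div, expPS, trivEuler, eulerPoly] using key
end

section
/- For all n ≥ 0, i ≥ 0, j ≥ 0, the number γ_{n,i,j} equals the number of 0-1-2 increasing rooted forests on {0,1,…,n} having exactly i+j leaves, of which exactly i leaves are children of the root 0. Concretely, γ_{n,i,j} equals the number of functions p : {1,…,n} → {0,1,…,n} such that p(m) < m for every m, such that every vertex v ∈ {1,…,n} has at most 2 children (where the children of v are the elements of p⁻¹(v)), such that every vertex v with p(v) = 0 has at most 1 child, and such that i = #{v ∈ {1,…,n} : p⁻¹(v) = ∅ and p(v) = 0} and j = #{v ∈ {1,…,n} : p⁻¹(v) = ∅ and p(v) ≠ 0}. -/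
open Finset

/-- The numbers `γ_{n,i,j}`: zero for negative `i` or `j`, with `γ_{0,0,0} = 1`,
`γ_{0,i,j} = 0` for `(i,j) ≠ (0,0)`, and the recurrence
`γ_{n+1,i,j} = γ_{n,i−1,j} + (1+i)γ_{n,i+1,j−1} + jγ_{n,i,j} + (n−i−2j+2)γ_{n,i,j−1}`. -/
def gam : ℕ → ℤ → ℤ → ℤ
  | 0, i, j => if i = 0 ∧ j = 0 then 1 else 0
  | n + 1, i, j =>
      if i < 0 ∨ j < 0 then 0
      else gam n (i - 1) j + (1 + i) * gam n (i + 1) (j - 1) + j * gam n i j +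
        ((n : ℤ) - i - 2 * j + 2) * gam n i (j - 1)

/-! Deleting the largest vertex `n + 1` of a forest leaves a forest on `{0, …, n}`. Conversely,
the new vertex can be attached to the root, to a root leaf, to a deep leaf, or to a deep vertex
with one child; this shifts the leaf statistics `(i, j)` by `(1, 0)`, `(-1, 1)`, `(0, 0)` and
`(0, 1)` respectively, and there are `1`, `i`, `j` and `n - i - 2j` such choices, the last because
the free child slots of a forest on `{0, …, n}` number exactly `n`. This is the recurrence of `γ`.
-/

lemma card_filter_and_ne_add_ite {α : Type*} [Fintype α] [DecidableEq α] (P : α → Prop)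
    [DecidablePred P] (a : α) : #{x | P x ∧ a ≠ x} + (if P a then 1 else 0) = #{x | P x} := by
  rw [← filter_filter, filter_ne]
  split_ifs with h
  · exact card_erase_add_one (by simpa using h)
  · rw [erase_eq_of_notMem (by simpa using h), add_zero]

/-- `q : ParentMap n` is the parent function of a rooted forest on `{0, …, n}` with root `0`:
the vertex `u + 1` is encoded by `u : Fin n` and its parent is `q u`. A vertex is *deep* when its
parent is not the root. -/
abbrev ParentMap (n : ℕ) := Fin n → Fin (n + 1)

namespace ParentMap

variable {n : ℕ} (q : ParentMap n)

def childCount (u : Fin n) : ℕ := #{m | (q m : ℕ) = u + 1}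

def capacity (u : Fin n) : ℕ := if (q u : ℕ) = 0 then 1 else 2

def IsForest : Prop := (∀ m, (q m : ℕ) ≤ m) ∧ ∀ u, q.childCount u ≤ q.capacity u

lemma isForest_iff : q.IsForest ↔ (∀ m, (q m : ℕ) ≤ m) ∧ (∀ u, q.childCount u ≤ 2) ∧
    ∀ u, (q u : ℕ) = 0 → q.childCount u ≤ 1 := by
  refine and_congr_right fun _ => ?_
  simp only [capacity, ← forall_and]
  refine forall_congr' fun u => ?_
  split_ifs with h <;> simp [h]
  omega

def IsRootLeaf (u : Fin n) : Prop := q.childCount u = 0 ∧ (q u : ℕ) = 0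

def IsDeepLeaf (u : Fin n) : Prop := q.childCount u = 0 ∧ (q u : ℕ) ≠ 0

def IsDeepUnary (u : Fin n) : Prop := q.childCount u = 1 ∧ (q u : ℕ) ≠ 0

instance : Decidable q.IsForest := inferInstanceAs (Decidable (_ ∧ _))
instance (u : Fin n) : Decidable (q.IsRootLeaf u) := inferInstanceAs (Decidable (_ ∧ _))
instance (u : Fin n) : Decidable (q.IsDeepLeaf u) := inferInstanceAs (Decidable (_ ∧ _))
instance (u : Fin n) : Decidable (q.IsDeepUnary u) := inferInstanceAs (Decidable (_ ∧ _))

def rootLeafCount : ℕ := #{u | q.IsRootLeaf u}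

def deepLeafCount : ℕ := #{u | q.IsDeepLeaf u}

def deepUnaryCount : ℕ := #{u | q.IsDeepUnary u}

lemma childCount_lt_capacity_iff (u : Fin n) :
    q.childCount u < q.capacity u ↔ q.IsRootLeaf u ∨ q.IsDeepLeaf u ∨ q.IsDeepUnary u := by
  unfold capacity IsRootLeaf IsDeepLeaf IsDeepUnary
  split_ifs <;> omega

lemma sum_childCount_add_card_root_children :
    ∑ u, q.childCount u + #{m | q m = 0} = n := by
  have hfib := card_eq_sum_card_fiberwise (f := q) (s := univ) (t := univ) fun _ _ => mem_univ _
  rw [card_univ, Fintype.card_fin, Fin.sum_univ_succ] at hfib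
  have hsucc : ∀ u : Fin n, #{m | q m = u.succ} = q.childCount u := fun u => by
    simp only [childCount, Fin.ext_iff, Fin.val_succ]
  simp only [hsucc] at hfib
  omega

lemma rootLeafCount_add_two_mul_deepLeafCount_add_deepUnaryCount (hq : q.IsForest) :
    q.rootLeafCount + 2 * q.deepLeafCount + q.deepUnaryCount = n := by
  -- Each vertex has `capacity u - childCount u` free child slots: one at a root leaf or a deep
  -- unary vertex, two at a deep leaf, none otherwise. Capacities total `2n - #root children`,
  -- children total `n - #root children`.
  have hslot : ∀ u, ((if q.IsRootLeaf u then 1 else 0) + 2 * (if q.IsDeepLeaf u then 1 else 0)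
      + (if q.IsDeepUnary u then 1 else 0)) + q.childCount u + (if q u = 0 then 1 else 0) = 2 := by
    intro u
    have hu := hq.2 u
    simp only [IsRootLeaf, IsDeepLeaf, IsDeepUnary, capacity, Fin.ext_iff, Fin.val_zero] at hu ⊢
    by_cases h0 : (q u : ℕ) = 0 <;> by_cases h1 : q.childCount u = 0 <;>
      by_cases h2 : q.childCount u = 1 <;> simp [h0, h1, h2] at hu ⊢ <;> omega
  have hsum := congrArg (fun f : Fin n → ℕ => ∑ u, f u) (funext hslot)
  simp only [sum_add_distrib, ← mul_sum, sum_const, card_univ, Fintype.card_fin,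
    smul_eq_mul] at hsum
  have := q.sum_childCount_add_card_root_children
  simp only [rootLeafCount, deepLeafCount, deepUnaryCount, card_filter]
  rw [card_filter] at this
  omega

def attach (v : Fin (n + 2)) : ParentMap (n + 1) := Fin.snoc (fun m => (q m).castSucc) v

@[simp] lemma attach_castSucc (v : Fin (n + 2)) (m : Fin n) :
    q.attach v m.castSucc = (q m).castSucc := Fin.snoc_castSucc ..

@[simp] lemma attach_last (v : Fin (n + 2)) : q.attach v (Fin.last n) = v := Fin.snoc_last ..

lemma attach_injective : Function.Injective2 (attach (n := n)) := by
  intro q q' v v' h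
  obtain ⟨hq, hv⟩ := Fin.snoc_injective2 h
  exact ⟨funext fun m => Fin.castSucc_injective _ (congrFun hq m), hv⟩

lemma exists_attach_eq {p : ParentMap (n + 1)} (hp : ∀ m, (p m : ℕ) ≤ m) :
    ∃ q : ParentMap n, q.attach (p (Fin.last n)) = p := by
  refine ⟨fun m => (p m.castSucc).castLT ?_, ?_⟩
  · have := hp m.castSucc
    simp only [Fin.val_castSucc] at this
    omega
  · conv_rhs => rw [← Fin.snoc_init_self p]
    rfl

lemma childCount_attach_castSucc (v : Fin (n + 2)) (u : Fin n) :
    (q.attach v).childCount u.castSucc = q.childCount u + if (v : ℕ) = u + 1 then 1 else 0 := by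
  simp only [childCount, card_filter, Fin.sum_univ_castSucc, attach_castSucc, attach_last,
    Fin.val_castSucc]

lemma childCount_attach_last {v : Fin (n + 2)} (hv : (v : ℕ) ≤ n) :
    (q.attach v).childCount (Fin.last n) = 0 := by
  have hv' : (v : ℕ) ≠ n + 1 := by omega
  have hq : ∀ m, (q m : ℕ) ≠ n + 1 := fun m => (q m).isLt.ne
  simp only [childCount, card_filter, Fin.sum_univ_castSucc, attach_castSucc, attach_last,
    Fin.val_castSucc, Fin.val_last, hq, hv', if_false, sum_const_zero]

lemma capacity_attach_castSucc (v : Fin (n + 2)) (u : Fin n) :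
    (q.attach v).capacity u.castSucc = q.capacity u := by
  simp [capacity]

lemma isForest_attach_iff {v : Fin (n + 2)} (hv : (v : ℕ) ≤ n) :
    (q.attach v).IsForest ↔
      (∀ m, (q m : ℕ) ≤ m) ∧
        ∀ u, q.childCount u + (if (v : ℕ) = u + 1 then 1 else 0) ≤ q.capacity u := by
  simp only [IsForest, Fin.forall_fin_succ', attach_castSucc, attach_last, Fin.val_castSucc,
    Fin.val_last, childCount_attach_castSucc, capacity_attach_castSucc,
    q.childCount_attach_last hv, zero_le, and_true, hv]

lemma isForest_attach_zero : (q.attach 0).IsForest ↔ q.IsForest := by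
  rw [q.isForest_attach_iff (Nat.zero_le n)]
  simp [IsForest]

lemma isForest_attach_succ (u : Fin n) :
    (q.attach u.castSucc.succ).IsForest ↔ q.IsForest ∧ q.childCount u < q.capacity u := by
  rw [q.isForest_attach_iff (by simp), IsForest, and_assoc]
  simp only [Fin.val_succ, Fin.val_castSucc, Nat.add_right_cancel_iff, Fin.val_inj]
  refine and_congr_right fun _ => ⟨fun h => ⟨fun w => (Nat.le_add_right _ _).trans (h w), ?_⟩, ?_⟩
  · exact Nat.lt_of_succ_le (by simpa using h u)
  · rintro ⟨h, hu⟩ w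
    split_ifs with hw
    · exact hw ▸ hu
    · exact h w

lemma not_isForest_attach_last : ¬ (q.attach (Fin.last (n + 1))).IsForest := fun h => by
  have := h.1 (Fin.last n)
  simp at this

lemma isRootLeaf_attach_castSucc (v : Fin (n + 2)) (u : Fin n) :
    (q.attach v).IsRootLeaf u.castSucc ↔ q.IsRootLeaf u ∧ (v : ℕ) ≠ u + 1 := by
  simp [IsRootLeaf, childCount_attach_castSucc, and_right_comm]

lemma isDeepLeaf_attach_castSucc (v : Fin (n + 2)) (u : Fin n) :
    (q.attach v).IsDeepLeaf u.castSucc ↔ q.IsDeepLeaf u ∧ (v : ℕ) ≠ u + 1 := by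
  simp [IsDeepLeaf, childCount_attach_castSucc, and_right_comm]

lemma rootLeafCount_attach {v : Fin (n + 2)} (hv : (v : ℕ) ≤ n) :
    (q.attach v).rootLeafCount =
      #{u | q.IsRootLeaf u ∧ (v : ℕ) ≠ u + 1} + if (v : ℕ) = 0 then 1 else 0 := by
  have hlast : (q.attach v).IsRootLeaf (Fin.last n) ↔ (v : ℕ) = 0 := by
    simp [IsRootLeaf, q.childCount_attach_last hv]
  simp only [rootLeafCount, card_filter, Fin.sum_univ_castSucc, isRootLeaf_attach_castSucc, hlast]

lemma deepLeafCount_attach {v : Fin (n + 2)} (hv : (v : ℕ) ≤ n) :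
    (q.attach v).deepLeafCount =
      #{u | q.IsDeepLeaf u ∧ (v : ℕ) ≠ u + 1} + if (v : ℕ) = 0 then 0 else 1 := by
  have hlast : (q.attach v).IsDeepLeaf (Fin.last n) ↔ (v : ℕ) ≠ 0 := by
    simp [IsDeepLeaf, q.childCount_attach_last hv]
  simp only [deepLeafCount, card_filter, Fin.sum_univ_castSucc, isDeepLeaf_attach_castSucc, hlast,
    ite_not]

lemma rootLeafCount_attach_zero : (q.attach 0).rootLeafCount = q.rootLeafCount + 1 := by
  rw [q.rootLeafCount_attach (v := 0) (Nat.zero_le n)]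
  simp [rootLeafCount]

lemma deepLeafCount_attach_zero : (q.attach 0).deepLeafCount = q.deepLeafCount := by
  rw [q.deepLeafCount_attach (v := 0) (Nat.zero_le n)]
  simp [deepLeafCount]

lemma rootLeafCount_attach_succ (u : Fin n) :
    (q.attach u.castSucc.succ).rootLeafCount + (if q.IsRootLeaf u then 1 else 0) =
      q.rootLeafCount := by
  rw [q.rootLeafCount_attach (by simp), rootLeafCount]
  simpa [Fin.val_inj] using card_filter_and_ne_add_ite q.IsRootLeaf u

lemma deepLeafCount_attach_succ (u : Fin n) :
    (q.attach u.castSucc.succ).deepLeafCount + (if q.IsDeepLeaf u then 1 else 0) =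
      q.deepLeafCount + 1 := by
  have := card_filter_and_ne_add_ite q.IsDeepLeaf u
  rw [q.deepLeafCount_attach (by simp), deepLeafCount]
  simp only [Fin.val_succ, Fin.val_castSucc, ne_eq, Nat.add_right_cancel_iff, Fin.val_inj,
    Nat.add_one_ne_zero, if_false] at this ⊢
  omega

end ParentMap

/-- Leaf statistics are taken in `ℤ` so that negative indices, where both sides of the
recurrence vanish, need no separate treatment. -/
def forests (n : ℕ) (i j : ℤ) : Finset (ParentMap n) :=
  {q | q.IsForest ∧ (q.rootLeafCount : ℤ) = i ∧ (q.deepLeafCount : ℤ) = j}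

namespace ParentMap

variable {n : ℕ} (q : ParentMap n)

lemma ite_attach_succ_mem_forests (u : Fin n) (i j : ℤ) :
    (if q.attach u.castSucc.succ ∈ forests (n + 1) i j then 1 else 0 : ℤ) =
      (if q.IsForest ∧ (q.rootLeafCount : ℤ) = i + 1 ∧ (q.deepLeafCount : ℤ) = j - 1 then
        if q.IsRootLeaf u then 1 else 0 else 0) +
      (if q.IsForest ∧ (q.rootLeafCount : ℤ) = i ∧ (q.deepLeafCount : ℤ) = j then
        if q.IsDeepLeaf u then 1 else 0 else 0) +
      (if q.IsForest ∧ (q.rootLeafCount : ℤ) = i ∧ (q.deepLeafCount : ℤ) = j - 1 then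
        if q.IsDeepUnary u then 1 else 0 else 0) := by
  have hroot := q.rootLeafCount_attach_succ u
  have hdeep := q.deepLeafCount_attach_succ u
  simp only [forests, mem_filter, mem_univ, true_and, isForest_attach_succ,
    childCount_lt_capacity_iff]
  unfold IsRootLeaf IsDeepLeaf IsDeepUnary at *
  by_cases hf : q.IsForest <;> by_cases c0 : q.childCount u = 0 <;>
    by_cases c1 : q.childCount u = 1 <;> by_cases r : (q u : ℕ) = 0 <;>
    simp [hf, c0, c1, r] at hroot hdeep ⊢ <;> split_ifs <;> omega

lemma card_attach_mem_forests (i j : ℤ) :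
    (#{v | q.attach v ∈ forests (n + 1) i j} : ℤ) =
      (if q.IsForest ∧ (q.rootLeafCount : ℤ) = i - 1 ∧ (q.deepLeafCount : ℤ) = j then 1 else 0) +
      (if q.IsForest ∧ (q.rootLeafCount : ℤ) = i + 1 ∧ (q.deepLeafCount : ℤ) = j - 1 then
        (q.rootLeafCount : ℤ) else 0) +
      (if q.IsForest ∧ (q.rootLeafCount : ℤ) = i ∧ (q.deepLeafCount : ℤ) = j then
        (q.deepLeafCount : ℤ) else 0) +
      (if q.IsForest ∧ (q.rootLeafCount : ℤ) = i ∧ (q.deepLeafCount : ℤ) = j - 1 then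
        (n - q.rootLeafCount - 2 * q.deepLeafCount : ℤ) else 0) := by
  rw [card_filter, Fin.sum_univ_succ, Fin.sum_univ_castSucc, Fin.succ_last]
  push_cast
  simp only [ite_attach_succ_mem_forests, sum_add_distrib, sum_ite_irrel, sum_boole,
    sum_const_zero]
  simp only [forests, mem_filter, mem_univ, true_and, isForest_attach_zero,
    rootLeafCount_attach_zero, deepLeafCount_attach_zero, not_isForest_attach_last, false_and,
    if_false, add_zero]
  by_cases hf : q.IsForest
  · have hslots := q.rootLeafCount_add_two_mul_deepLeafCount_add_deepUnaryCount hf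
    simp only [hf, true_and, rootLeafCount, deepLeafCount, deepUnaryCount] at hslots ⊢
    push_cast
    split_ifs <;> omega
  · simp [hf]

end ParentMap

lemma sum_ite_forests {n : ℕ} (f : ℤ → ℤ → ℤ) (i j : ℤ) :
    ∑ q : ParentMap n, (if q.IsForest ∧ (q.rootLeafCount : ℤ) = i ∧ (q.deepLeafCount : ℤ) = j then
      f q.rootLeafCount q.deepLeafCount else 0) = f i j * #(forests n i j) := by
  rw [← sum_filter, ← forests, sum_congr rfl fun q hq => by
    obtain ⟨-, hi, hj⟩ := (mem_filter.1 hq).2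
    rw [hi, hj], sum_const, nsmul_eq_mul, mul_comm]

lemma forests_eq_empty {n : ℕ} {i j : ℤ} (h : i < 0 ∨ j < 0) : forests n i j = ∅ :=
  filter_false_of_mem fun _ _ => by omega

lemma card_forests_succ {n : ℕ} (i j : ℤ) :
    #(forests (n + 1) i j) = ∑ q : ParentMap n, #{v | q.attach v ∈ forests (n + 1) i j} := by
  rw [← card_sigma]
  refine (card_bij (fun x _ => x.1.attach x.2) ?_ ?_ ?_).symm
  · rintro ⟨q, v⟩ h
    simpa using h
  · rintro ⟨q, v⟩ _ ⟨q', v'⟩ _ h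
    obtain ⟨rfl, rfl⟩ := ParentMap.attach_injective h
    rfl
  · intro p hp
    obtain ⟨q, hq⟩ := ParentMap.exists_attach_eq (mem_filter.1 hp).2.1.1
    exact ⟨⟨q, p (Fin.last n)⟩, by simpa [hq] using hp, hq⟩

theorem gam_eq_card_forests (n : ℕ) (i j : ℤ) : gam n i j = #(forests n i j) := by
  induction n generalizing i j with
  | zero =>
    simp [gam, forests, ParentMap.IsForest, ParentMap.rootLeafCount, ParentMap.deepLeafCount,
      eq_comm (a := (0 : ℤ))]
    split_ifs <;> rfl
  | succ n ih =>
    by_cases hneg : i < 0 ∨ j < 0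
    · simp [gam, hneg, forests_eq_empty hneg]
    rw [gam, if_neg hneg, card_forests_succ]
    push_cast
    simp only [ParentMap.card_attach_mem_forests, sum_add_distrib]
    rw [sum_ite_forests (fun _ _ => 1), sum_ite_forests (fun a _ => a),
      sum_ite_forests (fun _ b => b), sum_ite_forests (fun a b => n - a - 2 * b), ih, ih, ih, ih]
    ring

/-- `γ_{n,i,j}` equals the number of 0-1-2 increasing rooted forests on `{0,1,…,n}` with
`i+j` leaves, among which `i` leaves are children of the root `0`.  A forest is encoded by
its parent function `p : {1,…,n} → {0,…,n}` with `p(m) < m`; here the vertex `m ∈ {1,…,n}`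
is represented by the index `m-1 : Fin n`, and its parent `p(m) ∈ {0,…,n}` by `p ⟨m-1⟩ : Fin (n+1)`. -/
theorem stmt2 (n i j : ℕ) :
    gam n i j =
      (Finset.univ.filter (fun p : Fin n → Fin (n + 1) =>
        -- p(m) < m for every vertex m ∈ {1,…,n}
        (∀ m : Fin n, (p m : ℕ) ≤ (m : ℕ)) ∧
        -- every vertex v ∈ {1,…,n} has at most 2 children
        (∀ v : Fin n, (Finset.univ.filter fun m : Fin n => (p m : ℕ) = (v : ℕ) + 1).card ≤ 2) ∧
        -- every vertex v with p(v) = 0 has at most 1 child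
        (∀ v : Fin n, (p v : ℕ) = 0 →
          (Finset.univ.filter fun m : Fin n => (p m : ℕ) = (v : ℕ) + 1).card ≤ 1) ∧
        -- i = number of leaves that are children of the root 0
        i = (Finset.univ.filter fun v : Fin n =>
              (Finset.univ.filter fun m : Fin n => (p m : ℕ) = (v : ℕ) + 1).card = 0 ∧
              (p v : ℕ) = 0).card ∧
        -- j = number of leaves that are not children of the root 0
        j = (Finset.univ.filter fun v : Fin n =>
              (Finset.univ.filter fun m : Fin n => (p m : ℕ) = (v : ℕ) + 1).card = 0 ∧
              (p v : ℕ) ≠ 0).card)).card := by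
  rw [gam_eq_card_forests]
  congr 2
  refine filter_congr fun q _ => ?_
  simp only [ParentMap.isForest_iff, ParentMap.rootLeafCount, ParentMap.deepLeafCount,
    ParentMap.IsRootLeaf, ParentMap.IsDeepLeaf, ParentMap.childCount, Nat.cast_inj, eq_comm,
    and_assoc]
end

section
/- For every n ≥ 0, the following identity holds in the polynomial ring ℤ[x,y]: γ_{n+1}(x,y) = (x + n·y)·γ_n(x,y) + y·(1−x)·(∂/∂x)γ_n(x,y) + y·(1−2y)·(∂/∂y)γ_n(x,y), where γ_n(x,y) = Σ_{i,j ≥ 0} γ_{n,i,j} x^i y^j. -/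
/-! Compare coefficients. Multiplying by `x` or `y` shifts the coefficient array, and `∂/∂x`,
`∂/∂y` shift it back with the weights `i + 1`, `j + 1`. Once coefficients are extended by zero to
negative exponents these shift rules hold without case distinctions, and the coefficient of
`x^i y^j` on the right-hand side is then literally the recurrence defining `γ_{n+1,i,j}`. -/

open Finset MvPolynomial

/-- `γ_n(x,y) = Σ_{i,j≥0} γ_{n,i,j} x^i y^j ∈ ℤ[x,y]` (a finite sum, since `γ_{n,i,j} = 0`
unless `0 ≤ i ≤ n` and `0 ≤ j ≤ ⌊(n−i)/2⌋`); here `x = X 0`, `y = X 1`. -/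
noncomputable def gamPoly (n : ℕ) : MvPolynomial (Fin 2) ℤ :=
  ∑ i ∈ range (n + 1), ∑ j ∈ range ((n - i) / 2 + 1),
    MvPolynomial.C (gam n i j) * X 0 ^ i * X 1 ^ j

namespace MvPolynomial

variable {σ R : Type*}

section CommSemiring

variable [CommSemiring R] {p q : MvPolynomial σ R} {g h : (σ → ℤ) → R}

/-- Integer exponents make multiplication by `X i` a plain shift, free of truncated subtraction. -/
def HasCoeffFun (p : MvPolynomial σ R) (g : (σ → ℤ) → R) : Prop :=
  (∀ m : σ →₀ ℕ, coeff m p = g fun i => m i) ∧ ∀ v i, v i < 0 → g v = 0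

namespace HasCoeffFun

theorem eq (hp : p.HasCoeffFun g) (hq : q.HasCoeffFun h)
    (hgh : ∀ m : σ →₀ ℕ, (g fun i => m i) = h fun i => m i) : p = q :=
  ext _ _ fun m => by rw [hp.1, hq.1, hgh]

theorem add (hp : p.HasCoeffFun g) (hq : q.HasCoeffFun h) : (p + q).HasCoeffFun (g + h) :=
  ⟨fun m => by rw [coeff_add, hp.1, hq.1, Pi.add_apply],
    fun v i hv => by rw [Pi.add_apply, hp.2 v i hv, hq.2 v i hv, add_zero]⟩

theorem C_mul (hp : p.HasCoeffFun g) (a : R) : (C a * p).HasCoeffFun fun v => a * g v :=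
  ⟨fun m => by rw [coeff_C_mul, hp.1], fun v i hv => by simp [hp.2 v i hv]⟩

theorem X_mul [DecidableEq σ] (hp : p.HasCoeffFun g) (i : σ) :
    (X i * p).HasCoeffFun fun v => g (v - Pi.single i 1) := by
  refine ⟨fun m => ?_, fun v k hv => hp.2 _ k ?_⟩
  · simp only [coeff_X_mul', Finsupp.mem_support_iff]
    split_ifs with hm
    · rw [hp.1]
      congr 1
      funext k
      rcases eq_or_ne k i with rfl | hk <;> simp [*]
      omega
    · exact (hp.2 _ i (by simp [not_not.mp hm])).symm
  · rcases eq_or_ne k i with rfl | hk <;> simp [*]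
    omega

end HasCoeffFun

end CommSemiring

section CommRing

variable [CommRing R] {p q : MvPolynomial σ R} {g h : (σ → ℤ) → R}

namespace HasCoeffFun

theorem sub (hp : p.HasCoeffFun g) (hq : q.HasCoeffFun h) : (p - q).HasCoeffFun (g - h) :=
  ⟨fun m => by rw [coeff_sub, hp.1, hq.1, Pi.sub_apply],
    fun v i hv => by rw [Pi.sub_apply, hp.2 v i hv, hq.2 v i hv, sub_zero]⟩

theorem pderiv [DecidableEq σ] (hp : p.HasCoeffFun g) (i : σ) :
    (pderiv i p).HasCoeffFun fun v => ((v i + 1 : ℤ) : R) * g (v + Pi.single i 1) := by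
  refine ⟨fun m => ?_, fun v k hv => ?_⟩
  · rw [coeff_pderiv, hp.1, mul_comm]
    push_cast
    congr 2
    funext k
    rcases eq_or_ne k i with rfl | hk <;> simp [*]
  · beta_reduce
    by_cases hvi : v i = -1
    · rw [hvi, neg_add_cancel, Int.cast_zero, zero_mul]
    · rw [hp.2 _ k, mul_zero]
      rcases eq_or_ne k i with rfl | hk <;> simp [*]
      omega

end HasCoeffFun

end CommRing

end MvPolynomial

theorem gam_eq_zero_of_neg (n : ℕ) {i j : ℤ} (h : i < 0 ∨ j < 0) : gam n i j = 0 := by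
  cases n <;> simp only [gam] <;> split_ifs <;> first | rfl | omega

theorem gam_eq_zero_of_lt (n : ℕ) {i j : ℤ} (h : n < i + 2 * j) : gam n i j = 0 := by
  induction n generalizing i j with
  | zero => exact if_neg (by omega)
  | succ n ih =>
    rw [gam]
    split_ifs with hij
    · rfl
    push_cast at h
    rw [ih (by omega), ih (by omega), ih (by omega)]
    rcases lt_or_ge (n : ℤ) (i + 2 * (j - 1)) with h' | h'
    · rw [ih h']; ring
    · have : (n : ℤ) - i - 2 * j + 2 = 0 := by omega
      rw [this]; ring

theorem coeff_gamPoly (n : ℕ) (m : Fin 2 →₀ ℕ) : coeff m (gamPoly n) = gam n (m 0) (m 1) := by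
  have hm : ∀ i j : ℕ, Finsupp.single 0 i + Finsupp.single 1 j = m ↔ i = m 0 ∧ j = m 1 := by
    intro i j
    constructor
    · rintro rfl; simp
    · rintro ⟨rfl, rfl⟩; ext k; fin_cases k <;> simp
  simp only [gamPoly, coeff_sum, X_pow_eq_monomial, monomial_mul, C_mul_monomial, mul_one,
    coeff_monomial, hm, ite_and, Finset.sum_ite_irrel, Finset.sum_const_zero, Finset.sum_ite_eq',
    Finset.mem_range]
  split_ifs <;> first | rfl | exact (gam_eq_zero_of_lt n (by omega)).symm

theorem gamPoly_hasCoeffFun (n : ℕ) : (gamPoly n).HasCoeffFun fun v => gam n (v 0) (v 1) :=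
  ⟨coeff_gamPoly n, fun v k hv => gam_eq_zero_of_neg n (by fin_cases k <;> simp_all)⟩

/-- `γ_{n+1}(x,y) = (x+ny)γ_n(x,y) + y(1−x)(∂/∂x)γ_n(x,y) + y(1−2y)(∂/∂y)γ_n(x,y)`. -/
theorem stmt7 (n : ℕ) :
    gamPoly (n + 1) =
      (X 0 + (n : MvPolynomial (Fin 2) ℤ) * X 1) * gamPoly n +
        X 1 * (1 - X 0) * pderiv 0 (gamPoly n) +
        X 1 * (1 - 2 * X 1) * pderiv 1 (gamPoly n) := by
  have hγ := gamPoly_hasCoeffFun n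
  -- the right-hand side read as `xγ + n·yγ + (y∂ₓγ - x·y∂ₓγ) + (y∂ᵧγ - 2·y·y∂ᵧγ)`
  have hrhs := (((hγ.X_mul 0).add ((hγ.X_mul 1).C_mul n)).add
    (((hγ.pderiv 0).X_mul 1).sub (((hγ.pderiv 0).X_mul 1).X_mul 0))).add
    (((hγ.pderiv 1).X_mul 1).sub ((((hγ.pderiv 1).X_mul 1).X_mul 1).C_mul 2))
  convert (gamPoly_hasCoeffFun (n + 1)).eq hrhs fun m => ?_ using 1
  · simp only [map_natCast, map_ofNat]
    ring
  beta_reduce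
  rw [gam, if_neg (by omega)]
  simp only [Fin.isValue, Pi.add_apply, Pi.sub_apply, Pi.single_eq_same, Pi.single_eq_of_ne,
    one_ne_zero, zero_ne_one, ne_eq, not_false_eq_true, add_zero, sub_zero, sub_add_cancel,
    Int.cast_id]
  ring
end

section
/- Let ℚ[x,u] be the polynomial ring in two variables and let D : ℚ[x,u] → ℚ[x,u] be the unique ℚ-linear derivation with D(x) = x·(u+x) and D(u) = 0. Then for every n ≥ 1, the n-th iterate satisfies Dⁿ(x) = (u+x) · Σ_{k=1}^{n} k! · S(n,k) · x^k · u^{n−k}, where S(n,k) denotes the Stirling number of the second kind, i.e., the number of partitions of {1,…,n} into k nonempty blocks. -/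
/-!
Put `y = u + x`. Since `D x = x y` and `D u = 0`, we have `D (xᵏ uʲ) = k xᵏ uʲ y` and `D y = x y`,
so `D (y P) = y (x P + y (x ∂ₓ) P)` for every polynomial `P` in `x` and `u`. Starting from
`D x = y x`, induction gives `Dⁿ x = y Pₙ` where `Pₙ₊₁ = x Pₙ + y (x ∂ₓ) Pₙ`; comparing coefficients
of `xᵏ⁺¹ uʲ`, this recursion is `(k+1)! S(n+1,k+1) = (k+1) k! S(n,k) + (k+1) (k+1)! S(n,k+1)`, i.e.
the Stirling recurrence multiplied by `(k+1)!`.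
-/

open Finset MvPolynomial

/-- Stirling numbers of the second kind, via the recurrence
`S(n+1,k+1) = (k+1)·S(n,k+1) + S(n,k)`, `S(0,0) = 1`, `S(0,k+1) = 0`, `S(n+1,0) = 0`;
`S(n,k)` counts the partitions of an `n`-element set into `k` nonempty blocks. -/
def stirling2 : ℕ → ℕ → ℕ
  | 0, 0 => 1
  | 0, _ + 1 => 0
  | _ + 1, 0 => 0
  | n + 1, k + 1 => (k + 1) * stirling2 n (k + 1) + stirling2 n k

open scoped Nat

theorem stirling2_eq_zero_of_lt : ∀ {n k : ℕ}, n < k → stirling2 n k = 0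
  | 0, k + 1, _ => rfl
  | n + 1, k + 1, h => by
    rw [stirling2, stirling2_eq_zero_of_lt (by omega : n < k + 1),
      stirling2_eq_zero_of_lt (by omega : n < k), mul_zero]

theorem factorial_mul_stirling2_succ_succ (n k : ℕ) :
    (k + 1)! * stirling2 (n + 1) (k + 1) =
      (k + 1) * (k ! * stirling2 n k) + (k + 1) * ((k + 1)! * stirling2 n (k + 1)) := by
  rw [stirling2, Nat.factorial_succ]
  ring

section

variable {A : Type*} [CommSemiring A]

/-- The homogenised Fubini polynomial `∑ₖ k! S(n,k) xᵏ uⁿ⁻ᵏ`, indexed by `antidiagonal n` to avoid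
truncated subtraction. -/
def fubiniPoly (n : ℕ) (x u : A) : A :=
  ∑ p ∈ antidiagonal n, ((p.1 ! * stirling2 n p.1 : ℕ) : A) * x ^ p.1 * u ^ p.2

theorem fubiniPoly_one (x u : A) : fubiniPoly 1 x u = x := by
  simp [fubiniPoly, Nat.sum_antidiagonal_succ, stirling2]

theorem fubiniPoly_succ (n : ℕ) (x u : A) :
    fubiniPoly (n + 1) x u = x * fubiniPoly n x u + (u + x) *
      ∑ p ∈ antidiagonal n, ((p.1 * (p.1 ! * stirling2 n p.1) : ℕ) : A) * x ^ p.1 * u ^ p.2 := by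
  set W := ∑ p ∈ antidiagonal n, ((p.1 * (p.1 ! * stirling2 n p.1) : ℕ) : A) * x ^ p.1 * u ^ p.2
  have hW : u * W = ∑ p ∈ antidiagonal n,
      (((p.1 + 1) * ((p.1 + 1)! * stirling2 n (p.1 + 1)) : ℕ) : A) * x ^ (p.1 + 1) * u ^ p.2 := by
    -- re-index along `antidiagonal (n + 1)`; both boundary terms vanish
    have h := (Nat.sum_antidiagonal_succ (n := n) (f := fun p : ℕ × ℕ =>
      ((p.1 * (p.1 ! * stirling2 n p.1) : ℕ) : A) * x ^ p.1 * u ^ p.2)).symm.trans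
      Nat.sum_antidiagonal_succ'
    simp only [stirling2_eq_zero_of_lt (Nat.lt_succ_self n), Nat.cast_zero, zero_mul, mul_zero,
      zero_add] at h
    rw [h, mul_sum]
    exact sum_congr rfl fun p _ => by ring
  rw [add_mul, add_comm (u * W), ← add_assoc, hW, fubiniPoly, fubiniPoly, Nat.sum_antidiagonal_succ,
    mul_sum, mul_sum, ← sum_add_distrib, ← sum_add_distrib]
  have hS0 : stirling2 (n + 1) 0 = 0 := rfl
  simp only [hS0, mul_zero, Nat.cast_zero, zero_mul, zero_add]
  refine sum_congr rfl fun p _ => ?_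
  rw [factorial_mul_stirling2_succ_succ]
  push_cast
  ring

theorem fubiniPoly_eq_sum_Icc {n : ℕ} (hn : 1 ≤ n) (x u : A) :
    fubiniPoly n x u = ∑ k ∈ Icc 1 n, ((k ! * stirling2 n k : ℕ) : A) * x ^ k * u ^ (n - k) := by
  obtain ⟨m, rfl⟩ : ∃ m, n = m + 1 := ⟨n - 1, by omega⟩
  rw [fubiniPoly, Nat.sum_antidiagonal_eq_sum_range_succ
      (fun i j => ((i ! * stirling2 (m + 1) i : ℕ) : A) * x ^ i * u ^ j), range_eq_Ico,
    sum_eq_sum_Ico_succ_bot (Nat.succ_pos _), ← Ico_add_one_right_eq_Icc]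
  simp [stirling2]

end

section

variable {R A : Type*} [CommSemiring R] [CommSemiring A] [Algebra R A] (D : Derivation R A A)
  {x u : A}

theorem Derivation.map_pow_of_map_eq (hx : D x = x * (u + x)) (k : ℕ) :
    D (x ^ k) = k * x ^ k * (u + x) := by
  induction k with
  | zero => simp
  | succ k ih =>
    rw [pow_succ, Derivation.leibniz, ih, hx, smul_eq_mul, smul_eq_mul]
    push_cast
    ring

theorem Derivation.map_fubiniPoly (hx : D x = x * (u + x)) (hu : D u = 0) (n : ℕ) :
    D (fubiniPoly n x u) = (u + x) *
      ∑ p ∈ antidiagonal n, ((p.1 * (p.1 ! * stirling2 n p.1) : ℕ) : A) * x ^ p.1 * u ^ p.2 := by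
  rw [fubiniPoly, map_sum, mul_sum]
  refine sum_congr rfl fun p _ => ?_
  simp only [Derivation.leibniz, Derivation.leibniz_pow, D.map_natCast, hu,
    D.map_pow_of_map_eq hx, smul_eq_mul]
  push_cast
  ring

theorem Derivation.map_mul_fubiniPoly (hx : D x = x * (u + x)) (hu : D u = 0) (n : ℕ) :
    D ((u + x) * fubiniPoly n x u) = (u + x) * fubiniPoly (n + 1) x u := by
  rw [Derivation.leibniz, D.map_fubiniPoly hx hu, map_add, hu, hx, fubiniPoly_succ,
    smul_eq_mul, smul_eq_mul]
  ring

theorem Derivation.iterate_succ_apply_eq_mul_fubiniPoly (hx : D x = x * (u + x)) (hu : D u = 0)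
    (n : ℕ) : D^[n + 1] x = (u + x) * fubiniPoly (n + 1) x u := by
  induction n with
  | zero => rw [Function.iterate_one, hx, fubiniPoly_one, mul_comm]
  | succ n ih => rw [Function.iterate_succ_apply', ih, D.map_mul_fubiniPoly hx hu]

end

/-- In `ℚ[x,u]` with `x = X 0`, `u = X 1`: if `D` is the ℚ-linear derivation with
`D(x) = x(u+x)` and `D(u) = 0`, then for every `n ≥ 1`,
`Dⁿ(x) = (u+x) Σ_{k=1}^n k!·S(n,k)·x^k·u^{n−k}`. -/
theorem stmt9
    (D : Derivation ℚ (MvPolynomial (Fin 2) ℚ) (MvPolynomial (Fin 2) ℚ))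
    (hx : D (X 0) = X 0 * (X 1 + X 0)) (hu : D (X 1) = 0)
    (n : ℕ) (hn : 1 ≤ n) :
    (⇑D)^[n] (X 0) =
      (X 1 + X 0) *
        ∑ k ∈ Icc 1 n,
          MvPolynomial.C ((k.factorial * stirling2 n k : ℕ) : ℚ) * X 0 ^ k * X 1 ^ (n - k) := by
  obtain ⟨m, rfl⟩ : ∃ m, n = m + 1 := ⟨n - 1, by omega⟩
  rw [D.iterate_succ_apply_eq_mul_fubiniPoly hx hu, fubiniPoly_eq_sum_Icc hn]
  simp only [map_natCast]
end

section
/- For every integer n ≥ 3, the number of increasing plane trees on {1,…,n} having exactly 2 vertices of degree 0 (leaves), exactly n−3 vertices of degree 1, and exactly 1 vertex of degree 2 equals 2ⁿ − 2n. -/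
open Finset

/-- Increasing plane trees on `{1,…,n}`, encoded as pairs `(p, r)`: the vertex
`m ∈ {2,…,n}` is represented by the index `m-2 : Fin (n-1)` and the vertices `{1,…,n}`
by `Fin n` (vertex `v+1` for `v : Fin n`); `p` gives the parent (with `p(m) < m`) and `r`
the left-to-right position among siblings, a bijection onto `{0,…,deg−1}` over each vertex. -/
def planeTrees (n : ℕ) : Finset ((Fin (n - 1) → Fin n) × (Fin (n - 1) → Fin n)) :=
  Finset.univ.filter fun pr =>
    (∀ m : Fin (n - 1), (pr.1 m : ℕ) ≤ (m : ℕ)) ∧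
    (∀ v : Fin n,
      (Finset.univ.filter fun m : Fin (n - 1) => pr.1 m = v).image (fun m => (pr.2 m : ℕ)) =
        Finset.range (Finset.univ.filter fun m : Fin (n - 1) => pr.1 m = v).card)

/-- The number of vertices of degree `d` (i.e. with exactly `d` children) of an increasing
plane tree on `{1,…,n}`. -/
def degCount {n : ℕ} (pr : (Fin (n - 1) → Fin n) × (Fin (n - 1) → Fin n)) (d : ℕ) : ℕ :=
  (Finset.univ.filter fun v : Fin n =>
    (Finset.univ.filter fun m : Fin (n - 1) => pr.1 m = v).card = d).card

/-!
For such a tree write `f j = p j + 1` for the vertices `j ≥ 2`, where `p j` is the parent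
of `j`. Then `f j ≤ j`, and the fibres of `f` are the sets of children of `1, …, n - 1`, so they
all have at most one element except the fibre over `c = b + 1` for the branch vertex `b`, which
has two. Up to the first `j` with `f j < j` the map `f` is the identity, so this first jump lies
over `c`; hence `f` maps the jumps injectively and decreasingly into the set `S` consisting of `c`
and the jumps, which forces `f` to send every jump to its predecessor in `S`. Thus `f` is
determined by `S`, whose minimum is `c`, and every `S ⊆ {2, …, n}` with at least two elements
arises. The sibling order is forced except at `b`, where there are two choices, so there are
`2 (2 ^ (n - 1) - n) = 2 ^ n - 2 n` trees.
-/

namespace Finset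

variable {α : Type*} [LinearOrder α] {s t : Finset α} {a c : α}

def chainParent (s : Finset α) (a : α) : α :=
  if h : a ∈ s ∧ (s.filter (· < a)).Nonempty then (s.filter (· < a)).max' h.2 else a

theorem isGreatest_chainParent (ha : a ∈ s) (h : (s.filter (· < a)).Nonempty) :
    IsGreatest ↑(s.filter (· < a)) (s.chainParent a) := by
  rw [chainParent, dif_pos ⟨ha, h⟩]
  exact isGreatest_max' _ _

theorem chainParent_eq_self_of_not (h : ¬ (a ∈ s ∧ ∃ b ∈ s, b < a)) : s.chainParent a = a := by
  rw [chainParent, dif_neg (by simpa [filter_nonempty_iff] using h)]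

theorem chainParent_lt_iff : s.chainParent a < a ↔ a ∈ s ∧ ∃ b ∈ s, b < a := by
  refine ⟨fun h => ?_, fun ⟨ha, b, hb, hba⟩ => ?_⟩
  · by_contra h'
    exact h.ne (chainParent_eq_self_of_not h')
  · exact (mem_filter.1 (isGreatest_chainParent ha ⟨b, mem_filter.2 ⟨hb, hba⟩⟩).1).2

theorem chainParent_le (s : Finset α) (a : α) : s.chainParent a ≤ a := by
  by_cases h : a ∈ s ∧ ∃ b ∈ s, b < a
  · exact (chainParent_lt_iff.2 h).le
  · exact (chainParent_eq_self_of_not h).le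

theorem isGreatest_chainParent_of_lt (h : s.chainParent a < a) :
    IsGreatest ↑(s.filter (· < a)) (s.chainParent a) :=
  have ⟨ha, b, hb, hba⟩ := chainParent_lt_iff.1 h
  isGreatest_chainParent ha ⟨b, mem_filter.2 ⟨hb, hba⟩⟩

theorem chainParent_mem_of_lt (h : s.chainParent a < a) : s.chainParent a ∈ s :=
  (mem_filter.1 (isGreatest_chainParent_of_lt h).1).1

theorem chainParent_eq_of_isGreatest {b : α} (ha : a ∈ s)
    (h : IsGreatest ↑(s.filter (· < a)) b) : s.chainParent a = b :=
  (isGreatest_chainParent ha ⟨b, h.1⟩).unique h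

theorem injOn_chainParent : Set.InjOn s.chainParent {a | s.chainParent a < a} := by
  have key : ∀ a a', s.chainParent a < a → s.chainParent a' < a' →
      s.chainParent a = s.chainParent a' → ¬ a < a' := fun a a' ha ha' h hlt =>
    have ha_mem := (chainParent_lt_iff.1 ha).1
    absurd (h ▸ (isGreatest_chainParent_of_lt ha').2 (mem_filter.2 ⟨ha_mem, hlt⟩)) (not_le.2 ha)
  intro a ha a' ha' h
  exact le_antisymm (not_lt.1 (key a' a ha' ha h.symm)) (not_lt.1 (key a a' ha ha' h))

theorem chainParent_eq_self_of_min (hc : s.min = c) : s.chainParent c = c :=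
  chainParent_eq_self_of_not fun ⟨_, _, hb, hbc⟩ => not_lt.2 (min_le_of_eq hb hc) hbc

theorem min_eq_of_chainParent_eq_self (ha : a ∈ s) (h : s.chainParent a = a) : s.min = a := by
  refine le_antisymm (min_le ha) (Finset.le_min fun b hb => WithTop.coe_le_coe.2 ?_)
  by_contra hba
  exact (chainParent_lt_iff.2 ⟨ha, b, hb, not_le.1 hba⟩).ne h

theorem chainParent_lt_iff_mem_erase (hc : s.min = c) :
    s.chainParent a < a ↔ a ∈ s.erase c := by
  rw [chainParent_lt_iff, mem_erase]
  refine ⟨fun ⟨ha, b, hb, hba⟩ => ⟨((min_le_of_eq hb hc).trans_lt hba).ne', ha⟩,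
    fun ⟨hac, ha⟩ => ⟨ha, c, mem_of_min hc, (min_le_of_eq ha hc).lt_of_ne hac.symm⟩⟩

theorem chainParent_eq_of_min_erase {y : α} (hc : s.min = c) (hy : (s.erase c).min = y) :
    s.chainParent y = c := by
  have hlt : s.chainParent y < y := (chainParent_lt_iff_mem_erase hc).2 (mem_of_min hy)
  by_contra hne
  have hmem : s.chainParent y ∈ s.erase c := mem_erase.2 ⟨hne, chainParent_mem_of_lt hlt⟩
  exact not_le.2 hlt (min_le_of_eq hmem hy)

theorem chainParent_eq_of_ne {a' : α} (hc : s.min = c) (hne : a ≠ a')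
    (h : s.chainParent a = s.chainParent a') : s.chainParent a = c := by
  rcases (s.chainParent_le a).lt_or_eq with ha | ha <;>
    rcases (s.chainParent_le a').lt_or_eq with ha' | ha'
  · exact absurd (injOn_chainParent ha ha' h) hne
  · have hmem := chainParent_mem_of_lt ha
    rw [h, ha'] at hmem ⊢
    exact WithTop.coe_injective ((min_eq_of_chainParent_eq_self hmem ha').symm.trans hc)
  · have hmem := chainParent_mem_of_lt ha'
    rw [← h, ha] at hmem
    rw [ha]
    exact WithTop.coe_injective ((min_eq_of_chainParent_eq_self hmem ha).symm.trans hc)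
  · exact absurd (ha.symm.trans (h.trans ha')) hne

theorem chainParent_inj (hs : 2 ≤ #s) (ht : 2 ≤ #t) :
    s.chainParent = t.chainParent ↔ s = t := by
  refine ⟨fun h => ?_, fun h => h ▸ rfl⟩
  obtain ⟨c, hc⟩ := min_of_nonempty (s := s) (card_pos.1 (by omega))
  obtain ⟨c', hc'⟩ := min_of_nonempty (s := t) (card_pos.1 (by omega))
  have herase : s.erase c = t.erase c' := by
    ext a
    rw [← chainParent_lt_iff_mem_erase hc, ← chainParent_lt_iff_mem_erase hc', h]
  obtain ⟨y, hy⟩ := min_of_nonempty (s := s.erase c)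
    (card_pos.1 (by rw [card_erase_of_mem (mem_of_min hc)]; omega))
  have hcc : c = c' := by
    rw [← chainParent_eq_of_min_erase hc hy, ← chainParent_eq_of_min_erase hc' (herase ▸ hy), h]
  rw [← insert_erase (mem_of_min hc), ← insert_erase (mem_of_min hc'), herase, hcc]

theorem isGreatest_filter_lt_of_injOn {f : α → α}
    (hmaps : ∀ x ∈ s.erase c, f x ∈ s ∧ f x < x) (hinj : Set.InjOn f ↑(s.erase c))
    (ha : a ∈ s.erase c) : IsGreatest ↑(s.filter (· < a)) (f a) := by
  -- `f` maps the elements of `s.erase c` up to `a` injectively into the elements of `s` below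
  -- `a`, which are no more numerous; so it hits the largest of them, and only `a` can hit it.
  set U := s.filter (· < a)
  set T := (s.filter (· ≤ a)).erase c
  have hfa : f a ∈ U := mem_filter.2 (hmaps a ha)
  have hTs : T ⊆ s.erase c := fun x hx => by
    simp only [T, mem_erase, mem_filter] at hx ⊢
    exact ⟨hx.1, hx.2.1⟩
  have hTU : T.image f ⊆ U := image_subset_iff.2 fun x hx =>
    mem_filter.2 ⟨(hmaps x (hTs hx)).1,
      (hmaps x (hTs hx)).2.trans_le (mem_filter.1 (mem_erase.1 hx).2).2⟩
  have hcard : #U ≤ #(T.image f) := by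
    have haU : a ∉ U := fun h => lt_irrefl a (mem_filter.1 h).2
    have h1 : #U + 1 ≤ #(s.filter (· ≤ a)) := by
      rw [← card_insert_of_notMem haU]
      exact card_le_card (insert_subset (mem_filter.2 ⟨(mem_erase.1 ha).2, le_rfl⟩)
        (monotone_filter_right s fun _ _ => le_of_lt))
    have h2 : #(s.filter (· ≤ a)) - 1 ≤ #T := pred_card_le_card_erase
    rw [card_image_of_injOn (hinj.mono hTs)]
    omega
  have hmax : U.max' ⟨_, hfa⟩ ∈ T.image f := by
    rw [eq_of_subset_of_card_le hTU hcard]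
    exact max'_mem _ _
  obtain ⟨x, hxT, hx⟩ := mem_image.1 hmax
  have hxa : x = a := by
    by_contra hne
    have hxs := mem_filter.1 (mem_erase.1 hxT).2
    have hxU : x ∈ U := mem_filter.2 ⟨hxs.1, hxs.2.lt_of_ne hne⟩
    exact not_le.2 (hmaps x (hTs hxT)).2 (hx ▸ U.le_max' x hxU)
  subst hxa
  rw [hx]
  exact isGreatest_max' _ _

end Finset

theorem image_eq_range_card_iff_of_card_le_one {β : Type*} {C : Finset β} {r : β → ℕ} (hC : #C ≤ 1) :
    C.image r = range #C ↔ ∀ x ∈ C, r x = 0 := by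
  rcases Nat.le_one_iff_eq_zero_or_eq_one.1 hC with h | h
  · simp [card_eq_zero.1 h]
  · obtain ⟨x, rfl⟩ := card_eq_one.1 h
    simp [eq_comm]

theorem image_pair_eq_range_card_iff {β : Type*} [DecidableEq β] {r : β → ℕ} {x y : β} (hxy : x ≠ y) :
    ({x, y} : Finset β).image r = range #{x, y} ↔ r x = 0 ∧ r y = 1 ∨ r x = 1 ∧ r y = 0 := by
  rw [card_pair hxy, image_insert, image_singleton]
  constructor
  · intro h
    have h0 : 0 ∈ ({r x, r y} : Finset ℕ) := h ▸ by simp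
    have h1 : 1 ∈ ({r x, r y} : Finset ℕ) := h ▸ by simp
    have hx : r x ∈ range 2 := h ▸ by simp
    have hy : r y ∈ range 2 := h ▸ by simp
    simp only [mem_insert, mem_singleton, mem_range] at h0 h1 hx hy
    omega
  · rintro (⟨hx, hy⟩ | ⟨hx, hy⟩) <;> rw [hx, hy] <;> decide

section Fork

variable {α β γ : Type*} [Fintype β] [DecidableEq α]

def IsForkAt (f : β → α) (k : α) : Prop :=
  #{b | f b = k} = 2 ∧ ∀ a ≠ k, #{b | f b = a} ≤ 1

def IsSiblingOrder (f : β → α) (r : β → ℕ) : Prop :=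
  ∀ a, ({b | f b = a} : Finset β).image r = range #{b | f b = a}

theorem IsForkAt.eq_of_ne {f : β → α} {k a : α} (hk : IsForkAt f k) {b b' : β} (hne : b ≠ b')
    (hb : f b = a) (hb' : f b' = a) : a = k := by
  by_contra hak
  exact hne (card_le_one.1 (hk.2 a hak) b (by simp [hb]) b' (by simp [hb']))

theorem IsForkAt.comp [DecidableEq γ] {f : β → α} {g : α → γ} {k : α} (hg : g.Injective)
    (hk : IsForkAt f k) : IsForkAt (g ∘ f) (g k) := by
  refine ⟨by simpa [hg.eq_iff] using hk.1, fun c hc => ?_⟩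
  by_cases hrange : ∃ a, g a = c
  · obtain ⟨a, rfl⟩ := hrange
    simpa [hg.eq_iff] using hk.2 a (ne_of_apply_ne g hc)
  · simp only [not_exists] at hrange
    simp [hrange]

theorem IsForkAt.of_comp [DecidableEq γ] {f : β → α} {g : α → γ} {k : γ} (hg : g.Injective)
    (hk : IsForkAt (g ∘ f) k) : ∃ a, g a = k ∧ IsForkAt f a := by
  obtain ⟨b, hb⟩ : ∃ b, g (f b) = k := by
    obtain ⟨b, hb⟩ := card_pos.1 (hk.1.symm ▸ two_pos : 0 < #{b | (g ∘ f) b = k})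
    exact ⟨b, (mem_filter.1 hb).2⟩
  refine ⟨f b, hb, by simpa [← hb, hg.eq_iff] using hk.1, fun a ha => ?_⟩
  simpa [hg.eq_iff] using hk.2 (g a) (hb ▸ hg.ne ha)

theorem IsForkAt.isSiblingOrder_iff [DecidableEq β] {f : β → α} {k : α} {r : β → ℕ}
    (hk : IsForkAt f k) {x y : β} (hxy : x ≠ y) (hfib : ({b | f b = k} : Finset β) = {x, y}) :
    IsSiblingOrder f r ↔ (r x = 0 ∧ r y = 1 ∨ r x = 1 ∧ r y = 0) ∧ ∀ b, f b ≠ k → r b = 0 := by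
  constructor
  · intro h
    refine ⟨(image_pair_eq_range_card_iff hxy).1 (hfib ▸ h k), fun b hb => ?_⟩
    exact (image_eq_range_card_iff_of_card_le_one (hk.2 _ hb)).1 (h (f b)) b (by simp)
  · rintro ⟨hbranch, hzero⟩ a
    by_cases ha : a = k
    · rw [ha, hfib]
      exact (image_pair_eq_range_card_iff hxy).2 hbranch
    · exact (image_eq_range_card_iff_of_card_le_one (hk.2 a ha)).2 fun b hb =>
        hzero b ((mem_filter.1 hb).2 ▸ ha)

end Fork

theorem degree_profile_iff {α : Type*} [Fintype α] {deg : α → ℕ}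
    (hsum : ∑ a, deg a + 1 = Fintype.card α) :
    (#{a | deg a = 0} = 2 ∧ #{a | deg a = 1} = Fintype.card α - 3 ∧ #{a | deg a = 2} = 1) ↔
      ∃ k, deg k = 2 ∧ ∀ a ≠ k, deg a ≤ 1 := by
  have hparts : Fintype.card α =
      #{a | deg a = 0} + #{a | deg a = 1} + #{a | deg a = 2} + #{a | 2 < deg a} := by
    rw [← card_univ, card_eq_sum_ones]
    simp only [card_filter, ← sum_add_distrib]
    exact sum_congr rfl fun a _ => by split_ifs <;> omega
  constructor
  · rintro ⟨h0, h1, h2⟩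
    obtain ⟨k, hk⟩ := card_eq_one.1 h2
    have hmem : ∀ a, deg a = 2 ↔ a = k := fun a => by simpa using Finset.ext_iff.1 hk a
    refine ⟨k, (hmem k).2 rfl, fun a hak => ?_⟩
    have ha3 : ¬ 2 < deg a := fun h => by
      have : #{a | 2 < deg a} = 0 := by omega
      exact notMem_empty a (card_eq_zero.1 this ▸ mem_filter.2 ⟨mem_univ a, h⟩)
    have := mt (hmem a).1 hak
    omega
  · rintro ⟨k, hk2, hk1⟩
    have hle : ∀ a, deg a ≤ 2 := fun a => by
      by_cases hak : a = k
      exacts [hak ▸ hk2.le, (hk1 a hak).trans one_le_two]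
    have h2 : ({a | deg a = 2} : Finset α) = {k} := by
      ext a
      simp only [mem_filter, mem_univ, true_and, mem_singleton]
      refine ⟨fun h => by_contra fun hak => ?_, fun h => h ▸ hk2⟩
      have := hk1 a hak
      omega
    have h3 : ({a | 2 < deg a} : Finset α) = ∅ :=
      filter_false_of_mem fun a _ => not_lt.2 (hle a)
    have hsum' : ∑ a, deg a = #{a | deg a = 1} + 2 * #{a | deg a = 2} := by
      simp only [card_filter, mul_sum, ← sum_add_distrib]
      exact sum_congr rfl fun a _ => by have := hle a; split_ifs <;> omega
    rw [h2, card_singleton] at hsum' hparts ⊢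
    rw [h3, card_empty] at hparts
    exact ⟨by omega, by omega, rfl⟩

theorem card_filter_two_le_card {γ : Type*} [Fintype γ] [DecidableEq γ] :
    #{s : Finset γ | 2 ≤ #s} = 2 ^ Fintype.card γ - (Fintype.card γ + 1) := by
  have hsmall : ({s : Finset γ | ¬ 2 ≤ #s} : Finset _) =
      powersetCard 0 univ ∪ powersetCard 1 univ := by
    ext s
    simp only [mem_filter, mem_univ, true_and, mem_union, mem_powersetCard_univ]
    omega
  have hdisj : Disjoint (powersetCard 0 (univ : Finset γ)) (powersetCard 1 univ) :=
    disjoint_left.2 fun s h0 h1 => by simp only [mem_powersetCard_univ] at h0 h1; omega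
  have := card_filter_add_card_filter_not (s := (univ : Finset (Finset γ))) (fun s => 2 ≤ #s)
  rw [hsmall, card_union_of_disjoint hdisj, card_powersetCard, card_powersetCard, card_univ,
    card_univ, Fintype.card_finset, Nat.choose_zero_right, Nat.choose_one_right] at this
  omega

namespace Finset

variable {α : Type*} [LinearOrder α] [Fintype α] {s : Finset α} {c : α}

theorem exists_filter_chainParent_eq_pair (hc : s.min = c) (hs : 2 ≤ #s) :
    ∃ y, y ≠ c ∧ ({a | s.chainParent a = c} : Finset α) = {c, y} := by
  obtain ⟨y, hy⟩ := min_of_nonempty (s := s.erase c)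
    (card_pos.1 (by rw [card_erase_of_mem (mem_of_min hc)]; omega))
  have hyc : y ≠ c := (mem_erase.1 (mem_of_min hy)).1
  have hyjump : s.chainParent y < y := (chainParent_lt_iff_mem_erase hc).2 (mem_of_min hy)
  refine ⟨y, hyc, ext fun a => ?_⟩
  simp only [mem_filter, mem_univ, true_and, mem_insert, mem_singleton]
  refine ⟨fun ha => or_iff_not_imp_left.2 fun hac => ?_, ?_⟩
  · have hajump : s.chainParent a < a := (s.chainParent_le a).lt_of_ne (ha ▸ Ne.symm hac)
    exact injOn_chainParent hajump hyjump (ha.trans (chainParent_eq_of_min_erase hc hy).symm)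
  · rintro (rfl | rfl)
    exacts [chainParent_eq_self_of_min hc, chainParent_eq_of_min_erase hc hy]

theorem isForkAt_chainParent (hc : s.min = c) (hs : 2 ≤ #s) : IsForkAt s.chainParent c := by
  obtain ⟨y, hyc, hfib⟩ := exists_filter_chainParent_eq_pair hc hs
  refine ⟨by rw [hfib, card_pair hyc.symm], fun u hu => card_le_one.2 fun a ha a' ha' => ?_⟩
  simp only [mem_filter, mem_univ, true_and] at ha ha'
  by_contra hne
  exact hu (ha ▸ chainParent_eq_of_ne hc hne (ha.trans ha'.symm))

end Finset

namespace IsForkAt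

variable {α : Type*} [LinearOrder α] [Fintype α] {f : α → α} {k : α}

theorem exists_lt (hf : ∀ a, f a ≤ a) (hk : IsForkAt f k) : ∃ d, f d < d := by
  obtain ⟨x, y, hxy, hfib⟩ := card_eq_two.1 hk.1
  have hx : x ∈ ({b | f b = k} : Finset α) := by rw [hfib]; simp
  have hy : y ∈ ({b | f b = k} : Finset α) := by rw [hfib]; simp
  simp only [mem_filter, mem_univ, true_and] at hx hy
  by_cases hxk : x = k
  · exact ⟨y, (hf y).lt_of_ne (by rw [hy, ← hxk]; exact hxy)⟩
  · exact ⟨x, (hf x).lt_of_ne (by rw [hx]; exact Ne.symm hxk)⟩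

theorem lt_of_apply_lt (hf : ∀ a, f a ≤ a) (hk : IsForkAt f k) {d : α} (hd : f d < d) :
    k < d := by
  set J : Finset α := {a | f a < a}
  have hJ : J.Nonempty := ⟨d, by simpa [J] using hd⟩
  have hd₀ : f (J.min' hJ) < J.min' hJ := (mem_filter.1 (J.min'_mem hJ)).2
  have below : ∀ a < J.min' hJ, f a = a := fun a ha =>
    (hf a).eq_or_lt.resolve_right fun h => not_le.2 ha (J.min'_le a (by simpa [J] using h))
  -- the fibre over `f d₀` contains both `d₀` and `f d₀`
  have hfd₀ : f (J.min' hJ) = k := hk.eq_of_ne hd₀.ne (below _ hd₀) rfl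
  exact hfd₀ ▸ hd₀.trans_le (J.min'_le d (by simpa [J] using hd))

theorem apply_self (hf : ∀ a, f a ≤ a) (hk : IsForkAt f k) : f k = k :=
  (hf k).eq_or_lt.resolve_right fun h => lt_irrefl k (hk.lt_of_apply_lt hf h)

theorem apply_lt_apply_of_ne (hf : ∀ a, f a ≤ a) (hk : IsForkAt f k) {d : α} (hd : f d < d)
    (hdk : f d ≠ k) : f (f d) < f d :=
  (hf _).lt_of_ne fun h => hdk (hk.eq_of_ne hd.ne h rfl)

theorem injOn_of_lt (hf : ∀ a, f a ≤ a) (hk : IsForkAt f k) :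
    Set.InjOn f {d | f d < d} := by
  intro d (hd : f d < d) d' (hd' : f d' < d') h
  by_contra hne
  have hfdk : f d = k := hk.eq_of_ne hne rfl h.symm
  have hsub : ({k, d, d'} : Finset α) ⊆ ({a | f a = k} : Finset α) := by
    intro a ha
    simp only [mem_insert, mem_singleton] at ha
    rcases ha with rfl | rfl | rfl <;> simp [hk.apply_self hf, hfdk, ← h]
  have := card_le_card hsub
  rw [hk.1, card_insert_of_notMem (by simp [(hk.lt_of_apply_lt hf hd).ne,
    (hk.lt_of_apply_lt hf hd').ne]), card_pair hne] at this
  omega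

theorem exists_eq_chainParent (hf : ∀ a, f a ≤ a) (hk : IsForkAt f k) :
    ∃ s : Finset α, 2 ≤ #s ∧ f = s.chainParent := by
  set J : Finset α := {a | f a < a}
  have hkJ : k ∉ J := fun h => lt_irrefl k (hk.lt_of_apply_lt hf (mem_filter.1 h).2)
  have herase : (insert k J).erase k = J := erase_insert hkJ
  have hmaps : ∀ d ∈ (insert k J).erase k, f d ∈ insert k J ∧ f d < d := by
    rw [herase]
    intro d hd
    have hdlt : f d < d := (mem_filter.1 hd).2
    refine ⟨?_, hdlt⟩
    by_cases hdk : f d = k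
    · exact hdk ▸ mem_insert_self _ _
    · exact mem_insert_of_mem (mem_filter.2 ⟨mem_univ _, hk.apply_lt_apply_of_ne hf hdlt hdk⟩)
  have hinj : Set.InjOn f ↑((insert k J).erase k) := by
    rw [herase]
    exact (hk.injOn_of_lt hf).mono fun d hd => (mem_filter.1 hd).2
  refine ⟨insert k J, ?_, funext fun a => ?_⟩
  · obtain ⟨d, hd⟩ := hk.exists_lt hf
    have : 0 < #J := card_pos.2 ⟨d, mem_filter.2 ⟨mem_univ _, hd⟩⟩
    rw [card_insert_of_notMem hkJ]
    omega
  · rcases (hf a).lt_or_eq with ha | ha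
    · have haJ : a ∈ (insert k J).erase k := by
        rw [herase]
        exact mem_filter.2 ⟨mem_univ _, ha⟩
      exact (chainParent_eq_of_isGreatest (mem_of_mem_erase haJ)
        (isGreatest_filter_lt_of_injOn hmaps hinj haJ)).symm
    · rw [ha, chainParent_eq_self_of_not]
      rintro ⟨has, b, hb, hba⟩
      have hak : a = k := by simpa [J, ha] using has
      rcases mem_insert.1 hb with rfl | hbJ
      exacts [lt_irrefl _ (hak ▸ hba),
        lt_asymm (hak ▸ hk.lt_of_apply_lt hf (mem_filter.1 hbJ).2) hba]

end IsForkAt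

section ForkTree

variable {n : ℕ} {s : Finset (Fin (n - 1))} {c : Fin (n - 1)}

/-- Vertex `m + 2` is encoded by `m : Fin (n - 1)` and vertex `m + 1` by `Fin.castLE _ m : Fin n`,
so this is the parent map `p` for `f = s.chainParent`. -/
def forkParent (n : ℕ) (s : Finset (Fin (n - 1))) : Fin (n - 1) → Fin n :=
  Fin.castLE (n.sub_le 1) ∘ s.chainParent

/-- The children of the branch vertex are encoded by the minimum of `s` and the next element of
`s`; `b` says whether the minimum is placed second. -/
def forkRank (n : ℕ) (b : Bool) (s : Finset (Fin (n - 1))) (m : Fin (n - 1)) : Fin n :=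
  ⟨if (s.chainParent m : WithTop (Fin (n - 1))) = s.min ∧ (s.chainParent m = m ↔ b) then 1
    else 0, by have := m.2; split <;> omega⟩

def forkParams (n : ℕ) : Finset (Bool × Finset (Fin (n - 1))) :=
  (univ : Finset Bool) ×ˢ ({s | 2 ≤ #s} : Finset (Finset (Fin (n - 1))))

def forkTree (n : ℕ) (x : Bool × Finset (Fin (n - 1))) :
    (Fin (n - 1) → Fin n) × (Fin (n - 1) → Fin n) :=
  (forkParent n x.2, forkRank n x.1 x.2)

theorem forkParent_eq_castLE_iff {m u : Fin (n - 1)} :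
    forkParent n s m = Fin.castLE (n.sub_le 1) u ↔ s.chainParent m = u :=
  Fin.castLE_inj

theorem forkRank_of_ne (hc : s.min = c) {b : Bool} {m : Fin (n - 1)} (hm : s.chainParent m ≠ c) :
    (forkRank n b s m : ℕ) = 0 := by
  simp [forkRank, hc, hm]

theorem forkRank_of_eq (hc : s.min = c) {b : Bool} {m : Fin (n - 1)} (hm : s.chainParent m = c) :
    (forkRank n b s m : ℕ) = if (c = m ↔ b) then 1 else 0 := by
  simp [forkRank, hc, hm]

theorem isForkAt_forkParent (hc : s.min = c) (hs : 2 ≤ #s) :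
    IsForkAt (forkParent n s) (Fin.castLE (n.sub_le 1) c) :=
  (isForkAt_chainParent hc hs).comp (Fin.castLE_injective _)

theorem isSiblingOrder_forkParent_iff (hc : s.min = c) (hs : 2 ≤ #s) {y : Fin (n - 1)}
    (hyc : y ≠ c) (hfib : ({a | s.chainParent a = c} : Finset _) = {c, y})
    {r : Fin (n - 1) → ℕ} :
    IsSiblingOrder (forkParent n s) r ↔
      (r c = 0 ∧ r y = 1 ∨ r c = 1 ∧ r y = 0) ∧ ∀ m, s.chainParent m ≠ c → r m = 0 := by
  rw [(isForkAt_forkParent hc hs).isSiblingOrder_iff hyc.symm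
    (by simpa only [forkParent_eq_castLE_iff] using hfib)]
  simp only [ne_eq, forkParent_eq_castLE_iff]

theorem isSiblingOrder_forkRank (hs : 2 ≤ #s) (b : Bool) :
    IsSiblingOrder (forkParent n s) fun m => (forkRank n b s m : ℕ) := by
  obtain ⟨c, hc⟩ := min_of_nonempty (s := s) (card_pos.1 (by omega))
  obtain ⟨y, hyc, hfib⟩ := exists_filter_chainParent_eq_pair hc hs
  have hy : s.chainParent y = c := by simpa using Finset.ext_iff.1 hfib y
  refine (isSiblingOrder_forkParent_iff hc hs hyc hfib).2 ⟨?_, fun m hm => forkRank_of_ne hc hm⟩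
  rw [forkRank_of_eq hc (chainParent_eq_self_of_min hc), forkRank_of_eq hc hy]
  cases b <;> simp [hyc.symm]

theorem exists_eq_forkRank (hs : 2 ≤ #s) {r : Fin (n - 1) → Fin n}
    (hr : IsSiblingOrder (forkParent n s) fun m => (r m : ℕ)) : ∃ b, r = forkRank n b s := by
  obtain ⟨c, hc⟩ := min_of_nonempty (s := s) (card_pos.1 (by omega))
  obtain ⟨y, hyc, hfib⟩ := exists_filter_chainParent_eq_pair hc hs
  obtain ⟨hbranch, hzero⟩ := (isSiblingOrder_forkParent_iff hc hs hyc hfib).1 hr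
  refine ⟨decide ((r c : ℕ) = 1), funext fun m => Fin.ext ?_⟩
  by_cases hm : s.chainParent m = c
  · rw [forkRank_of_eq hc hm]
    have : m = c ∨ m = y := by simpa [hm] using Finset.ext_iff.1 hfib m
    rcases this with rfl | rfl <;> rcases hbranch with ⟨h1, h2⟩ | ⟨h1, h2⟩ <;> simp [h1, h2, hyc.symm]
  · rw [forkRank_of_ne hc hm, hzero m hm]

theorem card_forkParams (hn : 1 ≤ n) : #(forkParams n) = 2 * (2 ^ (n - 1) - n) := by
  rw [forkParams, card_product, card_univ, Fintype.card_bool, card_filter_two_le_card,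
    Fintype.card_fin, Nat.sub_add_cancel hn]

theorem injOn_forkTree : Set.InjOn (forkTree n) (forkParams n) := by
  rintro ⟨b, s⟩ hbs ⟨b', s'⟩ hbs' h
  have hs : 2 ≤ #s := by simpa [forkParams] using hbs
  have hs' : 2 ≤ #s' := by simpa [forkParams] using hbs'
  obtain ⟨hp, hr⟩ := Prod.mk.inj h
  obtain rfl : s = s' := (chainParent_inj hs hs').1 ((Fin.castLE_injective _).comp_left hp)
  obtain ⟨c, hc⟩ := min_of_nonempty (s := s) (card_pos.1 (by omega))
  have := congrArg (fun r => (r c : ℕ)) hr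
  simp only [forkRank_of_eq hc (chainParent_eq_self_of_min hc), true_iff] at this
  cases b <;> cases b' <;> simp_all

end ForkTree

section PlaneTrees

variable {n : ℕ}

theorem mem_planeTrees {pr : (Fin (n - 1) → Fin n) × (Fin (n - 1) → Fin n)} :
    pr ∈ planeTrees n ↔
      (∀ m, (pr.1 m : ℕ) ≤ m) ∧ IsSiblingOrder pr.1 fun m => (pr.2 m : ℕ) := by
  simp only [planeTrees, IsSiblingOrder, mem_filter, mem_univ, true_and]

theorem exists_castLE_comp {p : Fin (n - 1) → Fin n} (hp : ∀ m, (p m : ℕ) ≤ m) :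
    ∃ q : Fin (n - 1) → Fin (n - 1), (∀ m, q m ≤ m) ∧ p = Fin.castLE (n.sub_le 1) ∘ q :=
  ⟨fun m => Fin.castLT (p m) ((hp m).trans_lt m.2), hp, rfl⟩

theorem degCount_profile_iff (hn : 1 ≤ n)
    (pr : (Fin (n - 1) → Fin n) × (Fin (n - 1) → Fin n)) :
    (degCount pr 0 = 2 ∧ degCount pr 1 = n - 3 ∧ degCount pr 2 = 1) ↔ ∃ k, IsForkAt pr.1 k := by
  have hsum : ∑ v, #{m | pr.1 m = v} + 1 = Fintype.card (Fin n) := by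
    rw [← card_eq_sum_card_fiberwise fun _ _ => mem_univ _]
    simp only [card_univ, Fintype.card_fin]
    omega
  have := degree_profile_iff hsum
  rw [Fintype.card_fin] at this
  exact this

theorem filter_planeTrees_eq_image (hn : 1 ≤ n) :
    (planeTrees n).filter
        (fun pr => degCount pr 0 = 2 ∧ degCount pr 1 = n - 3 ∧ degCount pr 2 = 1) =
      (forkParams n).image (forkTree n) := by
  ext ⟨p, r⟩
  rw [mem_filter, mem_image, mem_planeTrees, degCount_profile_iff hn]
  constructor
  · rintro ⟨⟨hp, hr⟩, k, hk⟩
    obtain ⟨q, hq, rfl⟩ := exists_castLE_comp hp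
    obtain ⟨u, -, hu⟩ := hk.of_comp (Fin.castLE_injective (n.sub_le 1))
    obtain ⟨s, hs, rfl⟩ := hu.exists_eq_chainParent hq
    obtain ⟨b, rfl⟩ := exists_eq_forkRank hs hr
    exact ⟨(b, s), by simp [forkParams, hs], rfl⟩
  · rintro ⟨⟨b, s⟩, hbs, he⟩
    have hs : 2 ≤ #s := by simpa [forkParams] using hbs
    obtain ⟨rfl, rfl⟩ := Prod.mk.inj he
    obtain ⟨c, hc⟩ := min_of_nonempty (s := s) (card_pos.1 (by omega))
    exact ⟨⟨s.chainParent_le, isSiblingOrder_forkRank hs b⟩, _, isForkAt_forkParent hc hs⟩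

end PlaneTrees

/-- For `n ≥ 3`, the number of increasing plane trees on `{1,…,n}` with exactly `2` leaves,
`n−3` vertices of degree `1` and one vertex of degree `2` equals `2ⁿ − 2n`. -/
theorem stmt14 (n : ℕ) (hn : 3 ≤ n) :
    ((planeTrees n).filter fun pr =>
        degCount pr 0 = 2 ∧ degCount pr 1 = n - 3 ∧ degCount pr 2 = 1).card =
      2 ^ n - 2 * n := by
  rw [filter_planeTrees_eq_image (by omega), card_image_of_injOn injOn_forkTree,
    card_forkParams (by omega)]
  obtain ⟨k, rfl⟩ : ∃ k, n = k + 1 := ⟨n - 1, by omega⟩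
  rw [Nat.add_sub_cancel, pow_succ]
  omega
end
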